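/- arXiv:math/9712236 — 3 statements merged into one kernel-verified Lean document; each statement's English description precedes it below -/
import Mathlib

section
/- For a prime power q, the double product over all monic irreducible polynomials φ ≠ z over F_q and all integers r ≥ 1 of (1 - u^(m_φ)/q^(m_φ r)) equals 1 - u, where m_φ = deg φ, as an identity of formal power series in u with real coefficients. -/
open Polynomial

/-- The product topology (coefficientwise convergence) on formal power series. -/
instance (R : Type*) [CommRing R] [TopologicalSpace R] :
    TopologicalSpace (PowerSeries R) :=
  inferInstanceAs (TopologicalSpace ((Unit →₀ ℕ) → R))

open Filter Finset

namespace EulerAux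

open PowerSeries in
noncomputable def nrm (n : ℕ) (f : PowerSeries ℝ) : ℝ :=
  ∑ i ∈ Finset.range (n + 1), |PowerSeries.coeff (R := ℝ) i f|

lemma nrm_nonneg (n : ℕ) (f : PowerSeries ℝ) : 0 ≤ nrm n f :=
  Finset.sum_nonneg fun _ _ => abs_nonneg _

lemma abs_coeff_le {n i : ℕ} (h : i ≤ n) (f : PowerSeries ℝ) :
    |PowerSeries.coeff (R := ℝ) i f| ≤ nrm n f :=
  Finset.single_le_sum (f := fun i => |PowerSeries.coeff (R := ℝ) i f|) (fun _ _ => abs_nonneg _) (Finset.mem_range.2 (Nat.lt_succ_of_le h))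

lemma nrm_one (n : ℕ) : nrm n 1 = 1 := by
  rw [nrm, Finset.sum_eq_single_of_mem 0 (Finset.mem_range.2 (Nat.succ_pos n))]
  · simp
  · intro i _ hi; simp [PowerSeries.coeff_one, hi]

lemma nrm_add (n : ℕ) (f g : PowerSeries ℝ) : nrm n (f + g) ≤ nrm n f + nrm n g := by
  rw [nrm, nrm, nrm, ← Finset.sum_add_distrib]
  exact Finset.sum_le_sum fun i _ => by rw [map_add]; exact abs_add_le _ _

lemma nrm_neg (n : ℕ) (f : PowerSeries ℝ) : nrm n (-f) = nrm n f := by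
  simp [nrm]

lemma nrm_mul (n : ℕ) (f g : PowerSeries ℝ) : nrm n (f * g) ≤ nrm n f * nrm n g := by
  have h1 : nrm n (f * g) ≤ ∑ i ∈ Finset.range (n + 1), ∑ p ∈ Finset.HasAntidiagonal.antidiagonal i,
      |PowerSeries.coeff (R := ℝ) p.1 f| * |PowerSeries.coeff (R := ℝ) p.2 g| := by
    refine Finset.sum_le_sum fun i _ => ?_
    rw [PowerSeries.coeff_mul]
    exact (Finset.abs_sum_le_sum_abs _ _).trans (le_of_eq (by simp [abs_mul]))
  have hdisj : ∀ i ∈ Finset.range (n+1), ∀ j ∈ Finset.range (n+1), i ≠ j →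
      Disjoint (Finset.HasAntidiagonal.antidiagonal i : Finset (ℕ × ℕ)) (Finset.HasAntidiagonal.antidiagonal j) := by
    intro i _ j _ hij
    refine Finset.disjoint_left.2 fun p hpi hpj => hij ?_
    rw [← Finset.HasAntidiagonal.mem_antidiagonal.1 hpi, ← Finset.HasAntidiagonal.mem_antidiagonal.1 hpj]
  have h2 : ∑ i ∈ Finset.range (n + 1), ∑ p ∈ Finset.HasAntidiagonal.antidiagonal i,
      |PowerSeries.coeff (R := ℝ) p.1 f| * |PowerSeries.coeff (R := ℝ) p.2 g|
      = ∑ p ∈ (Finset.range (n+1)).biUnion (fun i => Finset.HasAntidiagonal.antidiagonal i),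
        |PowerSeries.coeff (R := ℝ) p.1 f| * |PowerSeries.coeff (R := ℝ) p.2 g| :=
    (Finset.sum_biUnion hdisj).symm
  have h3 : (Finset.range (n+1)).biUnion (fun i => Finset.HasAntidiagonal.antidiagonal i)
      ⊆ Finset.range (n+1) ×ˢ Finset.range (n+1) := by
    intro p hp
    rcases Finset.mem_biUnion.1 hp with ⟨i, hi, hpi⟩
    have := Finset.HasAntidiagonal.mem_antidiagonal.1 hpi
    have hi' := Finset.mem_range.1 hi
    refine Finset.mem_product.2 ⟨Finset.mem_range.2 ?_, Finset.mem_range.2 ?_⟩ <;> omega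
  calc nrm n (f * g) ≤ _ := h1
    _ = _ := h2
    _ ≤ ∑ p ∈ Finset.range (n+1) ×ˢ Finset.range (n+1),
        |PowerSeries.coeff (R := ℝ) p.1 f| * |PowerSeries.coeff (R := ℝ) p.2 g| :=
      Finset.sum_le_sum_of_subset_of_nonneg h3
        (fun _ _ _ => mul_nonneg (abs_nonneg _) (abs_nonneg _))
    _ = nrm n f * nrm n g := by
      rw [Finset.sum_product, nrm, nrm, Finset.sum_mul]
      exact Finset.sum_congr rfl fun i _ => by rw [Finset.mul_sum]

section Estimates
variable {ι : Type*}

lemma nrm_prod_le (n : ℕ) (f : ι → PowerSeries ℝ) (a : ι → ℝ) (F : Finset ι)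
    (ha : ∀ s, 0 ≤ a s) (hfa : ∀ s, nrm n (f s - 1) ≤ a s) :
    nrm n (∏ s ∈ F, f s) ≤ ∏ s ∈ F, (1 + a s) := by
  classical
  induction F using Finset.cons_induction with
  | empty => simp [nrm_one]
  | cons s F hs ih =>
    rw [Finset.prod_cons, Finset.prod_cons]
    have hfs : nrm n (f s) ≤ 1 + a s := by
      calc nrm n (f s) = nrm n (1 + (f s - 1)) := by ring_nf
        _ ≤ nrm n 1 + nrm n (f s - 1) := nrm_add _ _ _
        _ ≤ 1 + a s := by rw [nrm_one]; exact add_le_add_right (hfa s) 1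
    refine (nrm_mul _ _ _).trans (mul_le_mul hfs ih (nrm_nonneg _ _) ?_)
    linarith [ha s]

lemma one_le_prod_one_add (a : ι → ℝ) (F : Finset ι) (ha : ∀ s, 0 ≤ a s) :
    (1:ℝ) ≤ ∏ s ∈ F, (1 + a s) := by
  calc (1:ℝ) = ∏ _s ∈ F, 1 := by simp
    _ ≤ ∏ s ∈ F, (1 + a s) :=
      Finset.prod_le_prod (fun _ _ => zero_le_one) (fun s _ => by linarith [ha s])

lemma nrm_prod_sub_one_le (n : ℕ) (f : ι → PowerSeries ℝ) (a : ι → ℝ) (F : Finset ι)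
    (ha : ∀ s, 0 ≤ a s) (hfa : ∀ s, nrm n (f s - 1) ≤ a s) :
    nrm n ((∏ s ∈ F, f s) - 1) ≤ (∏ s ∈ F, (1 + a s)) - 1 := by
  classical
  induction F using Finset.cons_induction with
  | empty => simp [nrm]
  | cons s F hs ih =>
    rw [Finset.prod_cons, Finset.prod_cons]
    have key : f s * (∏ x ∈ F, f x) - 1
        = (f s - 1) * (∏ x ∈ F, f x) + ((∏ x ∈ F, f x) - 1) := by ring
    rw [key]
    refine (nrm_add _ _ _).trans ?_
    have h1 : nrm n ((f s - 1) * ∏ x ∈ F, f x) ≤ a s * ∏ x ∈ F, (1 + a x) :=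
      (nrm_mul _ _ _).trans
        (mul_le_mul (hfa s) (nrm_prod_le n f a F ha hfa) (nrm_nonneg _ _) (ha s))
    have := one_le_prod_one_add a F ha
    nlinarith [ih]

lemma nrm_prod_sub_prod_le [DecidableEq ι] (n : ℕ) (f : ι → PowerSeries ℝ) (a : ι → ℝ) {F0 F : Finset ι}
    (hsub : F0 ⊆ F) (ha : ∀ s, 0 ≤ a s) (hfa : ∀ s, nrm n (f s - 1) ≤ a s) :
    nrm n ((∏ s ∈ F, f s) - ∏ s ∈ F0, f s)
      ≤ (∏ s ∈ F0, (1 + a s)) * ((∏ s ∈ F \ F0, (1 + a s)) - 1) := by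
  classical
  have hprod : ∏ s ∈ F, f s = (∏ s ∈ F0, f s) * ∏ s ∈ F \ F0, f s := by
    rw [mul_comm, Finset.prod_sdiff hsub]
  have key : (∏ s ∈ F, f s) - ∏ s ∈ F0, f s
      = (∏ s ∈ F0, f s) * ((∏ s ∈ F \ F0, f s) - 1) := by rw [hprod]; ring
  rw [key]
  refine (nrm_mul _ _ _).trans (mul_le_mul (nrm_prod_le n f a F0 ha hfa)
    (nrm_prod_sub_one_le n f a _ ha hfa) (nrm_nonneg _ _) ?_)
  exact (zero_le_one).trans (one_le_prod_one_add a F0 ha)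

lemma coeff_apply_single (n : ℕ) (f : PowerSeries ℝ) :
    PowerSeries.coeff (R := ℝ) n f = f (Finsupp.single () n) := rfl

theorem hasProd_of_coeff (f : ι → PowerSeries ℝ) (L : PowerSeries ℝ) (a : ℕ → ι → ℝ)
    (ha : ∀ n s, 0 ≤ a n s) (hfa : ∀ n s, nrm n (f s - 1) ≤ a n s)
    (hsum : ∀ n, Summable (a n)) (G : ℕ → Finset ι) (hG : Monotone G)
    (hGex : ∀ s, ∃ k, s ∈ G k)
    (hlim : ∀ n, Tendsto (fun k => PowerSeries.coeff (R := ℝ) n (∏ s ∈ G k, f s)) atTop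
      (nhds (PowerSeries.coeff (R := ℝ) n L))) : HasProd f L := by
  classical
  rw [HasProd]
  refine tendsto_pi_nhds.2 fun d => ?_
  have hd : d = Finsupp.single () (d ()) := Finsupp.unique_single d
  rw [hd]
  set n := d ()
  simp only [← coeff_apply_single]
  set l := PowerSeries.coeff (R := ℝ) n L with hl
  rw [SummationFilter.unconditional_filter, Metric.tendsto_atTop]
  intro ε hε
  set A := ∑' s, a n s with hA
  set δ := min 1 (ε / 3 / (Real.exp A * Real.exp 1)) with hδdef
  have hδpos : 0 < δ := lt_min one_pos (by positivity)
  obtain ⟨F0, hF0⟩ := summable_iff_vanishing_norm.1 (hsum n) δ hδpos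
  have prodle : ∀ T : Finset ι, ∏ s ∈ T, (1 + a n s) ≤ Real.exp (∑ s ∈ T, a n s) := by
    intro T
    rw [Real.exp_sum]
    refine Finset.prod_le_prod (fun s _ => by linarith [ha n s]) (fun s _ => ?_)
    have := Real.add_one_le_exp (a n s); linarith
  have final : Real.exp A * (Real.exp δ - 1) ≤ ε / 3 := by
    have hδ1 : δ ≤ 1 := min_le_left _ _
    have h4 : Real.exp δ * (1 - δ) ≤ 1 := by
      have h := mul_le_mul_of_nonneg_left (Real.add_one_le_exp (-δ)) (Real.exp_pos δ).le
      rw [← Real.exp_add] at h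
      simp only [add_neg_cancel, Real.exp_zero] at h
      calc Real.exp δ * (1 - δ) = Real.exp δ * (-δ + 1) := by ring
        _ ≤ 1 := h
    have h5 : Real.exp δ ≤ Real.exp 1 := Real.exp_le_exp.2 hδ1
    have h3 : Real.exp δ - 1 ≤ δ * Real.exp 1 := by nlinarith [Real.exp_pos δ]
    have hδ2 : δ * (Real.exp A * Real.exp 1) ≤ ε / 3 := by
      have h6 : δ ≤ ε / 3 / (Real.exp A * Real.exp 1) := min_le_right _ _
      rwa [le_div_iff₀ (by positivity)] at h6
    nlinarith [Real.exp_pos A, Real.exp_pos 1, hδpos]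
  have key : ∀ F : Finset ι, F0 ⊆ F →
      |PowerSeries.coeff (R := ℝ) n (∏ s ∈ F, f s) - PowerSeries.coeff (R := ℝ) n (∏ s ∈ F0, f s)|
        ≤ ε / 3 := by
    intro F hF
    have h1 : |PowerSeries.coeff (R := ℝ) n (∏ s ∈ F, f s) - PowerSeries.coeff (R := ℝ) n (∏ s ∈ F0, f s)|
        ≤ nrm n ((∏ s ∈ F, f s) - ∏ s ∈ F0, f s) := by
      rw [← map_sub]; exact abs_coeff_le le_rfl _
    have h2 := nrm_prod_sub_prod_le n f (a n) hF (ha n) (hfa n)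
    have sumF0 : ∑ s ∈ F0, a n s ≤ A := Summable.sum_le_tsum F0 (fun s _ => ha n s) (hsum n)
    have sumsd : ∑ s ∈ F \ F0, a n s ≤ δ := by
      have h := hF0 (F \ F0) sdiff_disjoint
      rw [Real.norm_eq_abs] at h
      exact (le_abs_self _).trans h.le
    have e1 : ∏ s ∈ F0, (1 + a n s) ≤ Real.exp A :=
      (prodle F0).trans (Real.exp_le_exp.2 sumF0)
    have e2 : ∏ s ∈ F \ F0, (1 + a n s) ≤ Real.exp δ :=
      (prodle _).trans (Real.exp_le_exp.2 sumsd)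
    have e3 : (∏ s ∈ F0, (1 + a n s)) * ((∏ s ∈ F \ F0, (1 + a n s)) - 1)
        ≤ Real.exp A * (Real.exp δ - 1) := by
      have g1 := one_le_prod_one_add (a n) F0 (ha n)
      have g2 := one_le_prod_one_add (a n) (F \ F0) (ha n)
      nlinarith
    linarith
  obtain ⟨k1, hk1⟩ := (Metric.tendsto_atTop.1 (hlim n)) (ε/3) (by positivity)
  have hGT : Tendsto G atTop atTop := tendsto_atTop_finset_of_monotone hG hGex
  obtain ⟨k, hkF0, hkk1⟩ := ((tendsto_atTop.1 hGT F0).and (eventually_ge_atTop k1)).exists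
  refine ⟨F0, fun F hF => ?_⟩
  have b1 := key F hF
  have b2 := key (G k) hkF0
  have b3 := hk1 k hkk1
  rw [Real.dist_eq] at b3 ⊢
  have tri : |PowerSeries.coeff (R := ℝ) n (∏ s ∈ F, f s) - l|
      ≤ |PowerSeries.coeff (R := ℝ) n (∏ s ∈ F, f s) - PowerSeries.coeff (R := ℝ) n (∏ s ∈ F0, f s)|
        + |PowerSeries.coeff (R := ℝ) n (∏ s ∈ F0, f s) - PowerSeries.coeff (R := ℝ) n (∏ s ∈ G k, f s)|
        + |PowerSeries.coeff (R := ℝ) n (∏ s ∈ G k, f s) - l| := by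
    have := abs_sub_le (PowerSeries.coeff (R := ℝ) n (∏ s ∈ F, f s))
      (PowerSeries.coeff (R := ℝ) n (∏ s ∈ G k, f s)) l
    have := abs_sub_le (PowerSeries.coeff (R := ℝ) n (∏ s ∈ F, f s))
      (PowerSeries.coeff (R := ℝ) n (∏ s ∈ F0, f s)) (PowerSeries.coeff (R := ℝ) n (∏ s ∈ G k, f s))
    linarith
  have b2' : |PowerSeries.coeff (R := ℝ) n (∏ s ∈ F0, f s)
      - PowerSeries.coeff (R := ℝ) n (∏ s ∈ G k, f s)| ≤ ε / 3 := by
    rw [abs_sub_comm]; exact b2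
  linarith

end Estimates
section Geom

noncomputable def geom (b : ℝ) : PowerSeries ℝ := PowerSeries.mk fun i => b ^ i

lemma coeff_geom (b : ℝ) (i : ℕ) : PowerSeries.coeff (R := ℝ) i (geom b) = b ^ i :=
  PowerSeries.coeff_mk _ _

lemma one_sub_mul_geom (b : ℝ) :
    (1 - PowerSeries.C (R := ℝ) b * PowerSeries.X) * geom b = 1 := by
  have expand : (1 - PowerSeries.C (R := ℝ) b * PowerSeries.X) * geom b
      = geom b - PowerSeries.C (R := ℝ) b * (PowerSeries.X * geom b) := by ring
  rw [expand]
  ext i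
  rw [map_sub, PowerSeries.coeff_one, coeff_geom]
  cases i with
  | zero =>
    rw [PowerSeries.coeff_C_mul, mul_comm PowerSeries.X (geom b),
      PowerSeries.coeff_zero_mul_X]
    simp
  | succ m =>
    rw [PowerSeries.coeff_C_mul, PowerSeries.coeff_succ_X_mul, coeff_geom]
    simp [pow_succ, mul_comm]

lemma one_sub_X_mul_geom_one : (1 - PowerSeries.X) * geom 1 = 1 := by
  have h := one_sub_mul_geom 1
  rwa [map_one, one_mul] at h

def Cong (n : ℕ) (A B : PowerSeries ℝ) : Prop :=
  ∀ i ≤ n, PowerSeries.coeff (R := ℝ) i A = PowerSeries.coeff (R := ℝ) i B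

lemma Cong.rfl {n : ℕ} (A : PowerSeries ℝ) : Cong n A A := fun _ _ => _root_.rfl

lemma Cong.trans {n : ℕ} {A B C : PowerSeries ℝ} (h : Cong n A B) (h' : Cong n B C) :
    Cong n A C := fun i hi => (h i hi).trans (h' i hi)

lemma Cong.mul {n : ℕ} {A A' B B' : PowerSeries ℝ} (h : Cong n A A') (h' : Cong n B B') :
    Cong n (A * B) (A' * B') := by
  intro i hi
  rw [PowerSeries.coeff_mul, PowerSeries.coeff_mul]
  refine Finset.sum_congr _root_.rfl fun p hp => ?_
  have hp' := Finset.HasAntidiagonal.mem_antidiagonal.1 hp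
  rw [h p.1 (by omega), h' p.2 (by omega)]

lemma Cong.prod {ι : Type*} {n : ℕ} {f g : ι → PowerSeries ℝ} (F : Finset ι)
    (h : ∀ s ∈ F, Cong n (f s) (g s)) :
    Cong n (∏ s ∈ F, f s) (∏ s ∈ F, g s) := by
  classical
  induction F using Finset.cons_induction with
  | empty => simpa using Cong.rfl 1
  | cons s F hs ih =>
    rw [Finset.prod_cons, Finset.prod_cons]
    exact (h s (Finset.mem_cons_self s F)).mul
      (ih fun t ht => h t (Finset.mem_cons.2 (Or.inr ht)))

lemma cong_one_sub_of_gt {n m : ℕ} (hm : n < m) (c : ℝ) :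
    Cong n (1 - PowerSeries.C (R := ℝ) c * PowerSeries.X ^ m) 1 := by
  intro i hi
  rw [map_sub, PowerSeries.coeff_C_mul, PowerSeries.coeff_X_pow]
  rw [if_neg (by omega)]
  ring_nf

lemma telescope (c : ℝ) (k : ℕ) :
    ∏ r ∈ Finset.range k,
        ((1 - PowerSeries.C (R := ℝ) (c ^ r) * PowerSeries.X) * geom (c ^ (r + 1)))
      = (1 - PowerSeries.X) * geom (c ^ k) := by
  induction k with
  | zero => simp [one_sub_X_mul_geom_one]
  | succ k ih =>
    rw [Finset.prod_range_succ, ih]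
    have h1 : (1 - PowerSeries.X) * geom (c ^ k) *
          ((1 - PowerSeries.C (R := ℝ) (c ^ k) * PowerSeries.X) * geom (c ^ (k + 1)))
        = (1 - PowerSeries.X) *
            ((1 - PowerSeries.C (R := ℝ) (c ^ k) * PowerSeries.X) * geom (c ^ k)) *
            geom (c ^ (k + 1)) := by ring
    rw [h1, one_sub_mul_geom, mul_one]

lemma coeff_one_sub_X_mul_geom (c : ℝ) (n : ℕ) :
    PowerSeries.coeff (R := ℝ) n ((1 - PowerSeries.X) * geom c)
      = c ^ n - (if n = 0 then 0 else c ^ (n - 1)) := by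
  have expand : (1 - PowerSeries.X) * geom c = geom c - PowerSeries.X * geom c := by ring
  rw [expand, map_sub, coeff_geom]
  congr 1
  cases n with
  | zero => rw [mul_comm, PowerSeries.coeff_zero_mul_X]; simp
  | succ m => rw [PowerSeries.coeff_succ_X_mul, coeff_geom]; simp

end Geom
section Counting
variable {Fq : Type} [Field Fq] [Fintype Fq]

noncomputable def toPoly (j : ℕ) (c : Fin j → Fq) : Polynomial Fq :=
  Polynomial.X ^ j + ∑ i : Fin j, Polynomial.C (c i) * Polynomial.X ^ (i : ℕ)

lemma sumPart_coeff (j : ℕ) (c : Fin j → Fq) (k : ℕ) :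
    (∑ i : Fin j, Polynomial.C (c i) * Polynomial.X ^ (i : ℕ)).coeff k
      = if h : k < j then c ⟨k, h⟩ else 0 := by
  rw [Polynomial.finset_sum_coeff]
  by_cases h : k < j
  · rw [dif_pos h, Finset.sum_eq_single (⟨k, h⟩ : Fin j)]
    · simp [Polynomial.coeff_C_mul, Polynomial.coeff_X_pow]
    · intro i _ hik
      have : k ≠ (i : ℕ) := fun hk => hik (by ext; simp [hk.symm])
      simp [Polynomial.coeff_C_mul, Polynomial.coeff_X_pow, this]
    · intro hmem; exact absurd (Finset.mem_univ _) hmem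
  · rw [dif_neg h]
    refine Finset.sum_eq_zero fun i _ => ?_
    have : k ≠ (i : ℕ) := by omega
    simp [Polynomial.coeff_C_mul, Polynomial.coeff_X_pow, this]

lemma sumPart_degree_lt (j : ℕ) (c : Fin j → Fq) :
    (∑ i : Fin j, Polynomial.C (c i) * Polynomial.X ^ (i : ℕ)).degree < (j : WithBot ℕ) := by
  refine lt_of_le_of_lt (Polynomial.degree_sum_le _ _) ?_
  rw [Finset.sup_lt_iff (by exact WithBot.bot_lt_coe j)]
  intro i _
  exact lt_of_le_of_lt (Polynomial.degree_C_mul_X_pow_le _ _) (by exact_mod_cast i.2)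

lemma toPoly_monic (j : ℕ) (c : Fin j → Fq) : (toPoly j c).Monic :=
  Polynomial.monic_X_pow_add (sumPart_degree_lt j c)

lemma toPoly_degree (j : ℕ) (c : Fin j → Fq) : (toPoly j c).degree = j := by
  have h : (∑ i : Fin j, Polynomial.C (c i) * Polynomial.X ^ (i : ℕ)).degree
      < (Polynomial.X ^ j : Polynomial Fq).degree := by
    rw [Polynomial.degree_X_pow]; exact sumPart_degree_lt j c
  rw [toPoly, Polynomial.degree_add_eq_left_of_degree_lt h, Polynomial.degree_X_pow]

lemma toPoly_natDegree (j : ℕ) (c : Fin j → Fq) : (toPoly j c).natDegree = j :=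
  Polynomial.natDegree_eq_of_degree_eq_some (toPoly_degree j c)

lemma toPoly_coeff_lt (j : ℕ) (c : Fin j → Fq) {k : ℕ} (h : k < j) :
    (toPoly j c).coeff k = c ⟨k, h⟩ := by
  rw [toPoly, Polynomial.coeff_add, Polynomial.coeff_X_pow, if_neg (by omega),
    sumPart_coeff, dif_pos h, zero_add]

lemma toPoly_inj (j : ℕ) : Function.Injective (toPoly (Fq := Fq) j) := by
  intro c c' h
  funext i
  have := congrArg (fun p => Polynomial.coeff p (i : ℕ)) h
  simpa [toPoly_coeff_lt j _ i.2] using this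

open Classical in
noncomputable def MF (Fq : Type) [Field Fq] [Fintype Fq] (j : ℕ) : Finset (Polynomial Fq) :=
  (Finset.univ : Finset (Fin j → Fq)).image (toPoly j)

lemma mem_MF {j : ℕ} {p : Polynomial Fq} :
    p ∈ MF Fq j ↔ p.Monic ∧ p.natDegree = j := by
  classical
  constructor
  · intro hp
    rcases Finset.mem_image.1 hp with ⟨c, _, rfl⟩
    exact ⟨toPoly_monic j c, toPoly_natDegree j c⟩
  · rintro ⟨hm, hdeg⟩
    refine Finset.mem_image.2 ⟨fun i : Fin j => p.coeff (i : ℕ), Finset.mem_univ _, ?_⟩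
    ext k
    rcases lt_trichotomy k j with h | h | h
    · rw [toPoly_coeff_lt j _ h]
    · subst h
      rw [toPoly, Polynomial.coeff_add, Polynomial.coeff_X_pow, if_pos rfl,
        sumPart_coeff, dif_neg (lt_irrefl k), add_zero]
      exact (hdeg ▸ hm.coeff_natDegree).symm
    · rw [toPoly, Polynomial.coeff_add, Polynomial.coeff_X_pow, if_neg (by omega),
        sumPart_coeff, dif_neg (by omega), add_zero]
      exact (Polynomial.coeff_eq_zero_of_natDegree_lt (hdeg ▸ h)).symm

lemma card_MF (j : ℕ) : (MF Fq j).card = Fintype.card Fq ^ j := by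
  classical
  rw [MF, Finset.card_image_of_injective _ (toPoly_inj j), Finset.card_univ]
  rw [Fintype.card_pi]
  simp

lemma one_mem_MF : (1 : Polynomial Fq) ∈ MF Fq 0 :=
  mem_MF.2 ⟨Polynomial.monic_one, Polynomial.natDegree_one⟩

open Classical in
noncomputable def Jn (Fq : Type) [Field Fq] [Fintype Fq] (n : ℕ) : Finset (Polynomial Fq) :=
  ((Finset.range (n + 1)).biUnion (fun j => MF Fq j)).filter (fun p => Irreducible p)

lemma mem_Jn {n : ℕ} {p : Polynomial Fq} :
    p ∈ Jn Fq n ↔ p.Monic ∧ p.natDegree ≤ n ∧ Irreducible p := by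
  classical
  rw [Jn, Finset.mem_filter, Finset.mem_biUnion]
  constructor
  · rintro ⟨⟨j, hj, hp⟩, hirr⟩
    rcases mem_MF.1 hp with ⟨hm, hdeg⟩
    exact ⟨hm, hdeg ▸ Nat.lt_succ_iff.1 (Finset.mem_range.1 hj), hirr⟩
  · rintro ⟨hm, hdeg, hirr⟩
    exact ⟨⟨p.natDegree, Finset.mem_range.2 (Nat.lt_succ_of_le hdeg), mem_MF.2 ⟨hm, rfl⟩⟩, hirr⟩

lemma Jn_mono : Monotone (Jn Fq) := by
  intro a b hab p hp
  rcases mem_Jn.1 hp with ⟨h1, h2, h3⟩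
  exact mem_Jn.2 ⟨h1, h2.trans hab, h3⟩

lemma Jn_elt {n : ℕ} {p : Polynomial Fq} (hp : p ∈ Jn Fq n) :
    p.Monic ∧ Irreducible p ∧ 0 < p.natDegree ∧ p ≠ 0 := by
  rcases mem_Jn.1 hp with ⟨h1, h2, h3⟩
  refine ⟨h1, h3, ?_, h1.ne_zero⟩
  rcases Nat.eq_zero_or_pos p.natDegree with h | h
  · exact absurd (isUnit_one) (h1.natDegree_eq_zero.1 h ▸ h3.not_isUnit)
  · exact h

lemma prodT_monic {n : ℕ} {T : Finset (Polynomial Fq)} (hT : T ⊆ Jn Fq n) :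
    (∏ p ∈ T, p).Monic :=
  Polynomial.monic_prod_of_monic _ _ fun p hp => (Jn_elt (hT hp)).1

lemma prodT_natDegree {n : ℕ} {T : Finset (Polynomial Fq)} (hT : T ⊆ Jn Fq n) :
    (∏ p ∈ T, p).natDegree = ∑ p ∈ T, p.natDegree :=
  Polynomial.natDegree_prod _ _ fun p hp => (Jn_elt (hT hp)).2.2.2

lemma prodT_dvd {n : ℕ} {T : Finset (Polynomial Fq)} {m : Polynomial Fq}
    (hT : T ⊆ Jn Fq n) (hdvd : ∀ p ∈ T, p ∣ m) : (∏ p ∈ T, p) ∣ m := by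
  refine Finset.prod_dvd_of_coprime ?_ hdvd
  intro p hp p' hp' hne
  have h1 := Jn_elt (hT hp)
  have h2 := Jn_elt (hT hp')
  refine h1.2.1.coprime_iff_not_dvd.2 fun hdvd' => hne ?_
  exact Polynomial.eq_of_monic_of_associated h1.1 h2.1
    (h1.2.1.associated_of_dvd h2.2.1 hdvd')

lemma nonempty_divs {n j : ℕ} {m : Polynomial Fq} [DecidablePred (· ∣ m)]
    (hm : m ∈ MF Fq j) (hj : 1 ≤ j) (hjn : j ≤ n) :
    ((Jn Fq n).filter (· ∣ m)).Nonempty := by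
  classical
  rcases mem_MF.1 hm with ⟨hmon, hdeg⟩
  have hne : m ≠ 0 := hmon.ne_zero
  have hnu : ¬IsUnit m := by
    intro hu
    have := Polynomial.natDegree_eq_zero_of_isUnit hu
    omega
  obtain ⟨p, hpirr, hpdvd⟩ := WfDvdMonoid.exists_irreducible_factor hnu hne
  have hpne : p ≠ 0 := hpirr.ne_zero
  refine ⟨normalize p, Finset.mem_filter.2 ⟨mem_Jn.2 ⟨Polynomial.monic_normalize hpne, ?_, ?_⟩, ?_⟩⟩
  · have hdvd2 : normalize p ∣ m := normalize_dvd_iff.2 hpdvd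
    exact le_trans (Polynomial.natDegree_le_of_dvd hdvd2 hne) (by omega)
  · exact (associated_normalize p).irreducible hpirr
  · exact normalize_dvd_iff.2 hpdvd

lemma core {n j : ℕ} (hj1 : 1 ≤ j) (hjn : j ≤ n) :
    ∑ T ∈ (Jn Fq n).powerset.filter (fun T => ∑ p ∈ T, p.natDegree ≤ j),
        (-1 : ℝ) ^ T.card * (Fintype.card Fq : ℝ) ^ (j - ∑ p ∈ T, p.natDegree) = 0 := by
  classical
  have hcard : ∀ e : ℕ, ((Fintype.card Fq : ℝ)) ^ e = ((MF Fq e).card : ℝ) := by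
    intro e; rw [card_MF]; push_cast; ring
  have step1 : ∀ T : Finset (Polynomial Fq),
      (-1 : ℝ) ^ T.card * (Fintype.card Fq : ℝ) ^ (j - ∑ p ∈ T, p.natDegree)
        = ∑ _g ∈ MF Fq (j - ∑ p ∈ T, p.natDegree), (-1 : ℝ) ^ T.card := by
    intro T; rw [Finset.sum_const, hcard, nsmul_eq_mul, mul_comm]
  rw [Finset.sum_congr rfl fun T _ => step1 T]
  rw [← Finset.sum_sigma ((Jn Fq n).powerset.filter (fun T => ∑ p ∈ T, p.natDegree ≤ j))
      (fun T => MF Fq (j - ∑ p ∈ T, p.natDegree)) (fun x => (-1 : ℝ) ^ x.1.card)]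
  have main : ∑ x ∈ ((Jn Fq n).powerset.filter
        (fun T => ∑ p ∈ T, p.natDegree ≤ j)).sigma
        (fun T => MF Fq (j - ∑ p ∈ T, p.natDegree)), (-1 : ℝ) ^ x.1.card
      = ∑ x ∈ (MF Fq j).sigma (fun m => ((Jn Fq n).filter (· ∣ m)).powerset),
          (-1 : ℝ) ^ x.2.card := by
    refine Finset.sum_bij'
      (fun a _ha => (⟨a.2 * ∏ p ∈ a.1, p, a.1⟩ :
        Σ _m : Polynomial Fq, Finset (Polynomial Fq)))
      (fun b _hb => (⟨b.2, b.1 /ₘ ∏ p ∈ b.2, p⟩ :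
        Σ _T : Finset (Polynomial Fq), Polynomial Fq))
      ?_ ?_ ?_ ?_ ?_
    · -- hi
      rintro ⟨T, g⟩ ha
      rw [Finset.mem_sigma, Finset.mem_filter, Finset.mem_powerset] at ha
      obtain ⟨⟨hTJ, hD⟩, hg⟩ := ha
      obtain ⟨hgmon, hgdeg⟩ := mem_MF.1 hg
      have hPmon := prodT_monic hTJ
      rw [Finset.mem_sigma, Finset.mem_powerset]
      constructor
      · refine mem_MF.2 ⟨hgmon.mul hPmon, ?_⟩
        rw [hgmon.natDegree_mul hPmon, hgdeg, prodT_natDegree hTJ]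
        omega
      · intro p hp
        refine Finset.mem_filter.2 ⟨hTJ hp, ?_⟩
        exact dvd_mul_of_dvd_right (Finset.dvd_prod_of_mem _ hp) g
    · -- hj
      rintro ⟨m, T⟩ hb
      rw [Finset.mem_sigma, Finset.mem_powerset] at hb
      dsimp only at hb ⊢
      obtain ⟨hm, hT⟩ := hb
      obtain ⟨hmmon, hmdeg⟩ := mem_MF.1 hm
      have hTJ : T ⊆ Jn Fq n := fun p hp => (Finset.mem_filter.1 (hT hp)).1
      have hPmon := prodT_monic hTJ
      have hdvd : (∏ p ∈ T, p) ∣ m :=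
        prodT_dvd hTJ fun p hp => (Finset.mem_filter.1 (hT hp)).2
      have hmod : m %ₘ (∏ p ∈ T, p) = 0 :=
        (Polynomial.modByMonic_eq_zero_iff_dvd hPmon).2 hdvd
      have hmeq : m = (∏ p ∈ T, p) * (m /ₘ (∏ p ∈ T, p)) := by
        have := Polynomial.modByMonic_add_div m (∏ p ∈ T, p)
        rw [hmod, zero_add] at this
        exact this.symm
      have hgmon : (m /ₘ (∏ p ∈ T, p)).Monic :=
        hPmon.of_mul_monic_left (hmeq ▸ hmmon)
      have hdeg : m.natDegree = (∏ p ∈ T, p).natDegree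
          + (m /ₘ (∏ p ∈ T, p)).natDegree := by
        conv_lhs => rw [hmeq]
        exact hPmon.natDegree_mul hgmon
      rw [prodT_natDegree hTJ] at hdeg
      rw [Finset.mem_sigma, Finset.mem_filter, Finset.mem_powerset]
      dsimp only
      refine ⟨⟨hTJ, by omega⟩, mem_MF.2 ⟨hgmon, by omega⟩⟩
    · -- left_inv
      rintro ⟨T, g⟩ ha
      rw [Finset.mem_sigma, Finset.mem_filter, Finset.mem_powerset] at ha
      obtain ⟨⟨hTJ, _⟩, _⟩ := ha
      have hPmon := prodT_monic hTJ
      have hcalc : g * (∏ p ∈ T, p) /ₘ (∏ p ∈ T, p) = g := by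
        rw [mul_comm]
        exact Polynomial.mul_divByMonic_cancel_left g hPmon
      simp only [hcalc]
    · -- right_inv
      rintro ⟨m, T⟩ hb
      rw [Finset.mem_sigma, Finset.mem_powerset] at hb
      obtain ⟨hm, hT⟩ := hb
      obtain ⟨hmmon, _⟩ := mem_MF.1 hm
      have hTJ : T ⊆ Jn Fq n := fun p hp => (Finset.mem_filter.1 (hT hp)).1
      have hPmon := prodT_monic hTJ
      have hdvd : (∏ p ∈ T, p) ∣ m :=
        prodT_dvd hTJ fun p hp => (Finset.mem_filter.1 (hT hp)).2
      have hmod : m %ₘ (∏ p ∈ T, p) = 0 :=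
        (Polynomial.modByMonic_eq_zero_iff_dvd hPmon).2 hdvd
      have hmeq : (m /ₘ (∏ p ∈ T, p)) * (∏ p ∈ T, p) = m := by
        have := Polynomial.modByMonic_add_div m (∏ p ∈ T, p)
        rw [hmod, zero_add] at this
        rw [mul_comm]; exact this
      simp only [hmeq]
    · rintro ⟨T, g⟩ _; rfl
  rw [main, Finset.sum_sigma]
  refine Finset.sum_eq_zero fun m hm => ?_
  have hne : ((Jn Fq n).filter (· ∣ m)).Nonempty := nonempty_divs hm hj1 hjn
  have hz := Finset.sum_powerset_neg_one_pow_card_of_nonempty hne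
  have hcast := congrArg (fun z : ℤ => (z : ℝ)) hz
  push_cast at hcast
  simpa using hcast

lemma cong_one_sub_pow {n d : ℕ} (h : n < d) (a : ℝ) :
    Cong n (1 - (PowerSeries.C (R := ℝ) a * PowerSeries.X) ^ d) 1 := by
  rw [mul_pow, ← map_pow]
  exact cong_one_sub_of_gt h _

lemma euler (n : ℕ) (a : ℝ) (i : ℕ) (hi : i ≤ n) :
    PowerSeries.coeff (R := ℝ) i
        ((∏ p ∈ Jn Fq n, (1 - (PowerSeries.C (R := ℝ) a * PowerSeries.X) ^ p.natDegree))
          * geom ((Fintype.card Fq : ℝ) * a))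
      = PowerSeries.coeff (R := ℝ) i 1 := by
  classical
  have expand0 : ∏ p ∈ Jn Fq n, (1 - (PowerSeries.C (R := ℝ) a * PowerSeries.X) ^ p.natDegree)
      = ∏ p ∈ Jn Fq n, ((-((PowerSeries.C (R := ℝ) a * PowerSeries.X) ^ p.natDegree)) + 1) :=
    Finset.prod_congr rfl fun p _ => by ring
  rw [expand0, Finset.prod_add]
  have expand1 : ∀ T ∈ (Jn Fq n).powerset,
      (∏ p ∈ T, (-((PowerSeries.C (R := ℝ) a * PowerSeries.X) ^ p.natDegree)))
          * (∏ _p ∈ (Jn Fq n) \ T, (1 : PowerSeries ℝ))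
        = PowerSeries.C (R := ℝ) ((-1) ^ T.card * a ^ (∑ p ∈ T, p.natDegree))
            * PowerSeries.X ^ (∑ p ∈ T, p.natDegree) := by
    intro T _
    rw [Finset.prod_const_one, mul_one]
    have hneg : (-1 : PowerSeries ℝ) = PowerSeries.C (R := ℝ) (-1) := by rw [map_neg, map_one]
    calc ∏ p ∈ T, (-((PowerSeries.C (R := ℝ) a * PowerSeries.X) ^ p.natDegree))
        = ∏ p ∈ T, ((-1) * (PowerSeries.C (R := ℝ) a * PowerSeries.X) ^ p.natDegree) :=
          Finset.prod_congr rfl fun p _ => by ring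
      _ = (-1) ^ T.card * ∏ p ∈ T, (PowerSeries.C (R := ℝ) a * PowerSeries.X) ^ p.natDegree := by
          rw [Finset.prod_mul_distrib, Finset.prod_const]
      _ = (-1) ^ T.card * (PowerSeries.C (R := ℝ) a * PowerSeries.X) ^ (∑ p ∈ T, p.natDegree) := by
          rw [Finset.prod_pow_eq_pow_sum]
      _ = _ := by
          rw [hneg, ← map_pow, mul_pow, ← map_pow, map_mul, mul_assoc]
  rw [Finset.sum_congr rfl expand1, Finset.sum_mul, map_sum]
  have coeffterm : ∀ T : Finset (Polynomial Fq),
      PowerSeries.coeff (R := ℝ) i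
          (PowerSeries.C (R := ℝ) ((-1) ^ T.card * a ^ (∑ p ∈ T, p.natDegree))
            * PowerSeries.X ^ (∑ p ∈ T, p.natDegree)
            * geom ((Fintype.card Fq : ℝ) * a))
        = if (∑ p ∈ T, p.natDegree) ≤ i then
            ((-1) ^ T.card * a ^ (∑ p ∈ T, p.natDegree))
              * ((Fintype.card Fq : ℝ) * a) ^ (i - ∑ p ∈ T, p.natDegree)
          else 0 := by
    intro T
    have rearr : PowerSeries.C (R := ℝ) ((-1) ^ T.card * a ^ (∑ p ∈ T, p.natDegree))
          * PowerSeries.X ^ (∑ p ∈ T, p.natDegree)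
          * geom ((Fintype.card Fq : ℝ) * a)
        = PowerSeries.C (R := ℝ) ((-1) ^ T.card * a ^ (∑ p ∈ T, p.natDegree))
            * (geom ((Fintype.card Fq : ℝ) * a) * PowerSeries.X ^ (∑ p ∈ T, p.natDegree)) := by
      ring
    rw [rearr, PowerSeries.coeff_C_mul, PowerSeries.coeff_mul_X_pow', coeff_geom]
    split_ifs with h
    · rfl
    · rw [mul_zero]
  rw [Finset.sum_congr rfl fun T _ => coeffterm T]
  rw [Finset.sum_ite, Finset.sum_const, smul_zero, add_zero]
  have simpl : ∀ T ∈ (Jn Fq n).powerset.filter (fun T => (∑ p ∈ T, p.natDegree) ≤ i),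
      ((-1 : ℝ) ^ T.card * a ^ (∑ p ∈ T, p.natDegree))
          * ((Fintype.card Fq : ℝ) * a) ^ (i - ∑ p ∈ T, p.natDegree)
        = ((-1 : ℝ) ^ T.card * (Fintype.card Fq : ℝ) ^ (i - ∑ p ∈ T, p.natDegree)) * a ^ i := by
    intro T hT
    have hD : (∑ p ∈ T, p.natDegree) ≤ i := (Finset.mem_filter.1 hT).2
    rw [mul_pow]
    have : a ^ (∑ p ∈ T, p.natDegree) * a ^ (i - ∑ p ∈ T, p.natDegree) = a ^ i := by
      rw [← pow_add]; congr 1; omega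
    calc ((-1 : ℝ) ^ T.card * a ^ (∑ p ∈ T, p.natDegree))
          * ((Fintype.card Fq : ℝ) ^ (i - ∑ p ∈ T, p.natDegree)
              * a ^ (i - ∑ p ∈ T, p.natDegree))
        = ((-1 : ℝ) ^ T.card * (Fintype.card Fq : ℝ) ^ (i - ∑ p ∈ T, p.natDegree))
            * (a ^ (∑ p ∈ T, p.natDegree) * a ^ (i - ∑ p ∈ T, p.natDegree)) := by ring
      _ = _ := by rw [this]
  rw [Finset.sum_congr rfl simpl, ← Finset.sum_mul]
  rcases Nat.eq_zero_or_pos i with hi0 | hi1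
  · subst hi0
    have hfilter : (Jn Fq n).powerset.filter (fun T => (∑ p ∈ T, p.natDegree) ≤ 0)
        = {∅} := by
      ext T
      rw [Finset.mem_filter, Finset.mem_powerset, Finset.mem_singleton]
      constructor
      · rintro ⟨hTJ, hD⟩
        by_contra hne
        obtain ⟨p, hp⟩ := Finset.nonempty_iff_ne_empty.2 hne
        have h1 := (Jn_elt (hTJ hp)).2.2.1
        have h2 : p.natDegree ≤ ∑ p ∈ T, p.natDegree :=
          Finset.single_le_sum (f := fun p => p.natDegree) (fun _ _ => Nat.zero_le _) hp
        omega
      · rintro rfl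
        exact ⟨Finset.empty_subset _, by simp⟩
    rw [hfilter]
    simp
  · rw [core hi1 hi, zero_mul]
    rw [PowerSeries.coeff_one, if_neg (by omega)]

lemma euler_cong (n : ℕ) (a : ℝ) :
    Cong n ((∏ p ∈ Jn Fq n, (1 - (PowerSeries.C (R := ℝ) a * PowerSeries.X) ^ p.natDegree))
      * geom ((Fintype.card Fq : ℝ) * a)) 1 :=
  fun i hi => euler n a i hi

open Classical in
lemma euler_erase (n k : ℕ) (hnk : n ≤ k) (hk : 1 ≤ k) (a : ℝ) :
    Cong n (∏ p ∈ (Jn Fq k).erase Polynomial.X,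
        (1 - (PowerSeries.C (R := ℝ) a * PowerSeries.X) ^ p.natDegree))
      ((1 - PowerSeries.C (R := ℝ) ((Fintype.card Fq : ℝ) * a) * PowerSeries.X) * geom a) := by
  classical
  set q : ℝ := (Fintype.card Fq : ℝ) with hqdef
  have hX : Polynomial.X ∈ Jn Fq k :=
    mem_Jn.2 ⟨Polynomial.monic_X, by simpa using hk, Polynomial.irreducible_X⟩
  have hsplit : ∏ p ∈ Jn Fq k, (1 - (PowerSeries.C (R := ℝ) a * PowerSeries.X) ^ p.natDegree)
      = (1 - (PowerSeries.C (R := ℝ) a * PowerSeries.X) ^ 1)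
        * ∏ p ∈ (Jn Fq k).erase Polynomial.X,
            (1 - (PowerSeries.C (R := ℝ) a * PowerSeries.X) ^ p.natDegree) := by
    rw [← Finset.mul_prod_erase _ _ hX, Polynomial.natDegree_X]
  have hJsub : Jn Fq n ⊆ Jn Fq k := Jn_mono hnk
  have hsdiff1 : Cong n (∏ p ∈ Jn Fq k \ Jn Fq n,
      (1 - (PowerSeries.C (R := ℝ) a * PowerSeries.X) ^ p.natDegree)) 1 := by
    have := Cong.prod (n := n)
      (f := fun p => 1 - (PowerSeries.C (R := ℝ) a * PowerSeries.X) ^ p.natDegree)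
      (g := fun _ => (1 : PowerSeries ℝ)) (Jn Fq k \ Jn Fq n) ?_
    · rwa [Finset.prod_const_one] at this
    · intro p hp
      rcases Finset.mem_sdiff.1 hp with ⟨hpk, hpn⟩
      rcases mem_Jn.1 hpk with ⟨h1, _h2, h3⟩
      have hdeg : n < p.natDegree := by
        by_contra hle
        exact hpn (mem_Jn.2 ⟨h1, by omega, h3⟩)
      exact cong_one_sub_pow hdeg a
  have hcong1 : Cong n
      (∏ p ∈ Jn Fq k, (1 - (PowerSeries.C (R := ℝ) a * PowerSeries.X) ^ p.natDegree))
      (∏ p ∈ Jn Fq n, (1 - (PowerSeries.C (R := ℝ) a * PowerSeries.X) ^ p.natDegree)) := by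
    rw [← Finset.prod_sdiff hJsub]
    have := hsdiff1.mul (Cong.rfl
      (∏ p ∈ Jn Fq n, (1 - (PowerSeries.C (R := ℝ) a * PowerSeries.X) ^ p.natDegree)))
    rwa [one_mul] at this
  have h1 : Cong n
      ((∏ p ∈ Jn Fq k, (1 - (PowerSeries.C (R := ℝ) a * PowerSeries.X) ^ p.natDegree))
        * geom (q * a)) 1 :=
    (hcong1.mul (Cong.rfl (geom (q * a)))).trans (euler_cong n a)
  rw [hsplit] at h1
  set E := ∏ p ∈ (Jn Fq k).erase Polynomial.X,
      (1 - (PowerSeries.C (R := ℝ) a * PowerSeries.X) ^ p.natDegree) with hE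
  set U := (1 - PowerSeries.C (R := ℝ) (q * a) * PowerSeries.X) * geom a with hU
  have h2 : Cong n (U * ((1 - (PowerSeries.C (R := ℝ) a * PowerSeries.X) ^ 1) * E * geom (q * a)))
      (U * 1) := (Cong.rfl U).mul h1
  have heq : U * ((1 - (PowerSeries.C (R := ℝ) a * PowerSeries.X) ^ 1) * E * geom (q * a)) = E := by
    have e1 := one_sub_mul_geom a
    have e2 := one_sub_mul_geom (q * a)
    calc U * ((1 - (PowerSeries.C (R := ℝ) a * PowerSeries.X) ^ 1) * E * geom (q * a))
        = ((1 - PowerSeries.C (R := ℝ) a * PowerSeries.X) * geom a)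
            * ((1 - PowerSeries.C (R := ℝ) (q * a) * PowerSeries.X) * geom (q * a)) * E := by
          rw [hU]; ring
      _ = E := by rw [e1, e2, one_mul, one_mul]
  rw [heq, mul_one] at h2
  exact h2

variable (Fq) in
open Classical in
noncomputable def Ik (k : ℕ) :
    Finset {p : Polynomial Fq // p.Monic ∧ Irreducible p ∧ p ≠ Polynomial.X} :=
  ((Jn Fq k).erase Polynomial.X).attach.map
    ⟨fun x => ⟨x.1, (mem_Jn.1 (Finset.mem_of_mem_erase x.2)).1,
        (mem_Jn.1 (Finset.mem_of_mem_erase x.2)).2.2, Finset.ne_of_mem_erase x.2⟩,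
     by
      intro x y h
      have hv := congrArg Subtype.val h
      exact Subtype.ext hv⟩

open Classical in
lemma mem_Ik {k : ℕ} {s : {p : Polynomial Fq // p.Monic ∧ Irreducible p ∧ p ≠ Polynomial.X}} :
    s ∈ Ik Fq k ↔ s.1.natDegree ≤ k := by
  rw [Ik, Finset.mem_map]
  constructor
  · rintro ⟨x, _, rfl⟩
    exact (mem_Jn.1 (Finset.mem_of_mem_erase x.2)).2.1
  · intro hdeg
    have hmem : s.1 ∈ (Jn Fq k).erase Polynomial.X :=
      Finset.mem_erase.2 ⟨s.2.2.2, mem_Jn.2 ⟨s.2.1, hdeg, s.2.2.1⟩⟩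
    exact ⟨⟨s.1, hmem⟩, Finset.mem_attach _ _, Subtype.ext rfl⟩

open Classical in
lemma prod_Ik (k : ℕ) (g : Polynomial Fq → PowerSeries ℝ) :
    ∏ s ∈ Ik Fq k, g s.1 = ∏ p ∈ (Jn Fq k).erase Polynomial.X, g p := by
  rw [Ik, Finset.prod_map]
  exact Finset.prod_attach _ _

lemma nrm_C_X_pow (n d : ℕ) (e : ℝ) :
    nrm n (PowerSeries.C (R := ℝ) e * PowerSeries.X ^ d) = if d ≤ n then |e| else 0 := by
  have hco : ∀ i : ℕ, |PowerSeries.coeff (R := ℝ) i (PowerSeries.C (R := ℝ) e * PowerSeries.X ^ d)|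
      = if i = d then |e| else 0 := by
    intro i
    rw [PowerSeries.coeff_C_mul, PowerSeries.coeff_X_pow]
    split_ifs <;> simp
  rw [nrm, Finset.sum_congr rfl fun i _ => hco i,
    Finset.sum_ite_eq' (Finset.range (n + 1)) d fun _ => |e|]
  simp [Nat.lt_succ_iff]

end Counting
end EulerAux

open EulerAux

/-- For a finite field `Fq` with `q` elements, the double product over all monic
irreducible polynomials `φ ≠ z` over `Fq` and all `r ≥ 1` of `(1 - u^(m_φ)/q^(m_φ r))`
equals `1 - u`, as formal power series with real coefficients (`m_φ = deg φ`,
`z = X` is the monic irreducible of degree 1 with zero constant term). -/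
theorem prod_monic_irreducible_ne_X_eq (Fq : Type) [Field Fq] [Fintype Fq]
    (q : ℕ) (hq : q = Fintype.card Fq) :
    ∏' pr : {p : Polynomial Fq // p.Monic ∧ Irreducible p ∧ p ≠ Polynomial.X} × ℕ,
        (1 - PowerSeries.C (R := ℝ) (1 / (q : ℝ) ^ (pr.1.1.natDegree * (pr.2 + 1))) *
          PowerSeries.X ^ pr.1.1.natDegree) =
      1 - PowerSeries.X := by

  classical
  subst hq
  have hq2 : 2 ≤ Fintype.card Fq := Fintype.one_lt_card
  have hq0 : (0:ℝ) < (Fintype.card Fq : ℝ) := by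
    have : (0:ℕ) < Fintype.card Fq := by omega
    exact_mod_cast this
  set c : ℝ := 1 / (Fintype.card Fq : ℝ) with hc
  have hc0 : (0:ℝ) ≤ c := by positivity
  have hc1 : c < 1 := by
    rw [hc, div_lt_one hq0]
    exact_mod_cast hq2
  have hqc : (Fintype.card Fq : ℝ) * c = 1 := by
    rw [hc]; field_simp
  set S := {p : Polynomial Fq // p.Monic ∧ Irreducible p ∧ p ≠ Polynomial.X} × ℕ with hS
  set f : S → PowerSeries ℝ := fun pr =>
    1 - PowerSeries.C (R := ℝ) (1 / (Fintype.card Fq : ℝ) ^ (pr.1.1.natDegree * (pr.2 + 1))) *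
      PowerSeries.X ^ pr.1.1.natDegree with hfdef
  have hcoef : ∀ d r : ℕ, (1 / (Fintype.card Fq : ℝ) ^ (d * (r + 1))) = (c ^ (r + 1)) ^ d := by
    intro d r
    calc 1 / (Fintype.card Fq : ℝ) ^ (d * (r + 1)) = c ^ (d * (r + 1)) := by
          rw [hc, one_div_pow]
      _ = c ^ ((r + 1) * d) := by rw [Nat.mul_comm]
      _ = (c ^ (r + 1)) ^ d := pow_mul c (r + 1) d
  have hf1 : ∀ (s : {p : Polynomial Fq // p.Monic ∧ Irreducible p ∧ p ≠ Polynomial.X})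
      (r : ℕ), f (s, r)
      = 1 - (PowerSeries.C (R := ℝ) (c ^ (r + 1)) * PowerSeries.X) ^ s.1.natDegree := by
    intro s r
    rw [hfdef]
    dsimp only
    rw [hcoef, mul_pow, ← map_pow]
  have hdeg1 : ∀ s : {p : Polynomial Fq // p.Monic ∧ Irreducible p ∧ p ≠ Polynomial.X},
      0 < s.1.natDegree := by
    intro s
    rcases Nat.eq_zero_or_pos s.1.natDegree with h | h
    · have hone : s.1 = 1 := s.2.1.natDegree_eq_zero.1 h
      exact absurd (hone ▸ s.2.2.1) not_irreducible_one
    · exact h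
  set a : ℕ → S → ℝ := fun n sr =>
    if sr.1.1.natDegree ≤ n then c ^ (sr.1.1.natDegree * (sr.2 + 1)) else 0 with ha
  have ha0 : ∀ n sr, 0 ≤ a n sr := by
    intro n sr
    rw [ha]; dsimp only
    split_ifs
    · positivity
    · exact le_rfl
  have hfa : ∀ n sr, nrm n (f sr - 1) ≤ a n sr := by
    rintro n ⟨s, r⟩
    have hsub : f (s, r) - 1
        = -(PowerSeries.C (R := ℝ) (1 / (Fintype.card Fq : ℝ) ^ (s.1.natDegree * (r + 1))) *
            PowerSeries.X ^ s.1.natDegree) := by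
      rw [hfdef]; ring
    rw [hsub, nrm_neg, nrm_C_X_pow, ha]
    dsimp only
    have hval : (1 : ℝ) / (Fintype.card Fq : ℝ) ^ (s.1.natDegree * (r + 1))
        = c ^ (s.1.natDegree * (r + 1)) := by rw [hc, one_div_pow]
    split_ifs with h
    · rw [abs_of_nonneg (by positivity), hval]
    · exact le_rfl
  have hsum : ∀ n, Summable (a n) := by
    intro n
    have hgeo : Summable (fun r : ℕ => c ^ (r + 1)) := by
      have hg := summable_geometric_of_lt_one hc0 hc1
      simpa [pow_succ] using hg.mul_right c
    set F : S → ℝ := fun sr => if sr.1 ∈ Ik Fq n then c ^ (sr.2 + 1) else 0 with hF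
    have hF0 : 0 ≤ F := by
      intro sr
      rw [hF]; dsimp only
      split_ifs
      · positivity
      · exact le_rfl
    have hFsummable : Summable F := by
      refine (summable_prod_of_nonneg hF0).2 ⟨?_, ?_⟩
      · intro s
        by_cases hs : s ∈ Ik Fq n
        · simpa [hF, hs] using hgeo
        · simpa [hF, hs] using summable_zero
      · refine summable_of_ne_finset_zero (s := Ik Fq n) ?_
        intro s hs
        simp [hF, hs]
    refine Summable.of_nonneg_of_le (ha0 n) ?_ hFsummable
    rintro ⟨s, r⟩
    rw [ha, hF]; dsimp only
    split_ifs with h1 h2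
    · exact pow_le_pow_of_le_one hc0 hc1.le (Nat.le_mul_of_pos_left _ (hdeg1 s))
    · exact absurd (mem_Ik.2 h1) h2
    · positivity
    · exact le_rfl
  have hGmono : Monotone (fun k => (Ik Fq k) ×ˢ Finset.range k) := by
    intro k1 k2 hk
    refine Finset.product_subset_product ?_ (Finset.range_subset_range.2 hk)
    intro s hs
    exact mem_Ik.2 ((mem_Ik.1 hs).trans hk)
  have hGex : ∀ sr : S, ∃ k, sr ∈ (Ik Fq k) ×ˢ Finset.range k := by
    rintro ⟨s, r⟩
    refine ⟨max s.1.natDegree (r + 1), Finset.mem_product.2 ⟨mem_Ik.2 (le_max_left _ _),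
      Finset.mem_range.2 (Nat.lt_of_lt_of_le (Nat.lt_succ_self r) (le_max_right _ _))⟩⟩
  have hGprod : ∀ n k : ℕ, n ≤ k → 1 ≤ k →
      PowerSeries.coeff (R := ℝ) n (∏ sr ∈ (Ik Fq k) ×ˢ Finset.range k, f sr)
        = PowerSeries.coeff (R := ℝ) n ((1 - PowerSeries.X) * geom (c ^ k)) := by
    intro n k hnk hk1
    have hsplit : ∏ sr ∈ (Ik Fq k) ×ˢ Finset.range k, f sr
        = ∏ r ∈ Finset.range k, ∏ s ∈ Ik Fq k, f (s, r) :=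
      Finset.prod_product_right _ _ _
    have hinner : ∀ r : ℕ, ∏ s ∈ Ik Fq k, f (s, r)
        = ∏ p ∈ (Jn Fq k).erase Polynomial.X,
            (1 - (PowerSeries.C (R := ℝ) (c ^ (r + 1)) * PowerSeries.X) ^ p.natDegree) := by
      intro r
      rw [Finset.prod_congr rfl fun s _ => hf1 s r]
      exact prod_Ik (Fq := Fq) k
        (fun p => 1 - (PowerSeries.C (R := ℝ) (c ^ (r + 1)) * PowerSeries.X) ^ p.natDegree)
    have hcong : Cong n (∏ sr ∈ (Ik Fq k) ×ˢ Finset.range k, f sr)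
        ((1 - PowerSeries.X) * geom (c ^ k)) := by
      rw [hsplit, ← telescope c k]
      refine Cong.prod _ fun r _ => ?_
      rw [hinner r]
      have hee := euler_erase (Fq := Fq) n k hnk hk1 (c ^ (r + 1))
      have hqc2 : (Fintype.card Fq : ℝ) * c ^ (r + 1) = c ^ r := by
        calc (Fintype.card Fq : ℝ) * c ^ (r + 1)
            = c ^ r * ((Fintype.card Fq : ℝ) * c) := by rw [pow_succ]; ring
          _ = c ^ r := by rw [hqc, mul_one]
      rwa [hqc2] at hee
    exact hcong n le_rfl
  have hlim : ∀ n, Filter.Tendsto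
      (fun k => PowerSeries.coeff (R := ℝ) n (∏ sr ∈ (Ik Fq k) ×ˢ Finset.range k, f sr))
      Filter.atTop (nhds (PowerSeries.coeff (R := ℝ) n (1 - PowerSeries.X))) := by
    intro n
    set g : ℕ → ℝ := fun k => (c ^ k) ^ n - (if n = 0 then 0 else (c ^ k) ^ (n - 1)) with hg
    have hev : (fun k => PowerSeries.coeff (R := ℝ) n (∏ sr ∈ (Ik Fq k) ×ˢ Finset.range k, f sr))
        =ᶠ[Filter.atTop] g := by
      filter_upwards [Filter.eventually_ge_atTop (max n 1)] with k hk
      rw [hGprod n k (le_trans (le_max_left _ _) hk) (le_trans (le_max_right _ _) hk),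
        coeff_one_sub_X_mul_geom]
    have hck : Filter.Tendsto (fun k => c ^ k) Filter.atTop (nhds 0) :=
      tendsto_pow_atTop_nhds_zero_of_lt_one hc0 hc1
    have hgoal : Filter.Tendsto g Filter.atTop
        (nhds (PowerSeries.coeff (R := ℝ) n (1 - PowerSeries.X))) := by
      rcases Nat.eq_zero_or_pos n with hn0 | hn1
      · subst hn0
        have hgc : g = fun _ => 1 := by
          funext k; simp [hg]
        rw [hgc]
        have hv : PowerSeries.coeff (R := ℝ) 0 (1 - PowerSeries.X) = 1 := by
          rw [map_sub, PowerSeries.coeff_zero_X]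
          simp
        rw [hv]
        exact tendsto_const_nhds
      · have hgc : g = fun k => (c ^ k) ^ n - (c ^ k) ^ (n - 1) := by
          have hne : n ≠ 0 := by omega
          funext k; simp [hg, hne]
        rw [hgc]
        have ht : Filter.Tendsto (fun k => (c ^ k) ^ n - (c ^ k) ^ (n - 1)) Filter.atTop
            (nhds ((0:ℝ) ^ n - (0:ℝ) ^ (n - 1))) := (hck.pow n).sub (hck.pow (n - 1))
        have hv : PowerSeries.coeff (R := ℝ) n (1 - PowerSeries.X)
            = (0:ℝ) ^ n - (0:ℝ) ^ (n - 1) := by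
          rw [map_sub, PowerSeries.coeff_one, PowerSeries.coeff_X]
          rcases Nat.lt_or_ge n 2 with h2 | h2
          · have hn1 : n = 1 := by omega
            subst hn1
            norm_num
          · rw [if_neg (by omega), if_neg (by omega), zero_pow (by omega : n ≠ 0),
              zero_pow (by omega : n - 1 ≠ 0)]
        rw [hv]
        exact ht
    exact hgoal.congr' hev.symm
  have hprod : HasProd f (1 - PowerSeries.X) :=
    hasProd_of_coeff f _ a ha0 hfa hsum (fun k => (Ik Fq k) ×ˢ Finset.range k)
      hGmono hGex hlim
  haveI : T2Space (PowerSeries ℝ) := inferInstanceAs (T2Space ((Unit →₀ ℕ) → ℝ))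
  exact hprod.tprod_eq
end

section
/- The number of unipotent elements of GL(n,q) is q^(n(n-1)). -/
open Module Submodule Finset

section Aux

attribute [local instance] Fintype.ofFinite

lemma natCard_sigma {β : Type*} [Fintype β] (γ : β → Type*) [∀ b, Finite (γ b)] :
    Nat.card ((b : β) × γ b) = ∑ b, Nat.card (γ b) := by
  classical
  simp only [Nat.card_eq_fintype_card]
  exact Fintype.card_sigma

lemma natCard_fiberwise {α β : Type*} [Finite α] [Fintype β] (f : α → β) :
    Nat.card α = ∑ b, Nat.card {a // f a = b} := by
  rw [← natCard_sigma]
  exact Nat.card_congr (Equiv.sigmaFiberEquiv f).symm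

instance finite_linearMap {R M N : Type*} [Semiring R] [AddCommMonoid M] [Module R M]
    [AddCommMonoid N] [Module R N] [Finite M] [Finite N] : Finite (M →ₗ[R] N) :=
  Finite.of_injective (fun f => (f : M → N)) DFunLike.coe_injective

lemma end_pow_finrank {K V : Type*} [Field K] [AddCommGroup V] [Module K V]
    [FiniteDimensional K V] {φ : Module.End K V} (h : IsNilpotent φ) :
    φ ^ (finrank K V) = 0 := by
  have h1 := h.charpoly_eq_X_pow_finrank
  have h2 := LinearMap.aeval_self_charpoly φ
  rw [h1, map_pow, Polynomial.aeval_X] at h2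
  exact h2

lemma krylov_indep {K V : Type*} [Field K] [AddCommGroup V] [Module K V]
    {φ : Module.End K V} {v : V} {k : ℕ}
    (h0 : (φ ^ k) v = 0) (h1 : ∀ j < k, (φ ^ j) v ≠ 0) :
    LinearIndependent K (fun i : Fin k => (φ ^ (i : ℕ)) v) := by
  classical
  rw [Fintype.linearIndependent_iff]
  intro g hg
  by_contra hne
  push_neg at hne
  obtain ⟨i₀, hi₀⟩ := hne
  set s : Finset (Fin k) := Finset.univ.filter (fun i => g i ≠ 0) with hs
  have hsne : s.Nonempty := ⟨i₀, by simp [hs, hi₀]⟩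
  set j := s.min' hsne with hj
  have hjs : j ∈ s := s.min'_mem hsne
  have hgj : g j ≠ 0 := by simpa [hs] using hjs
  have hmin : ∀ i ∈ s, j ≤ i := fun i hi => s.min'_le i hi
  have hbig : ∀ m, k ≤ m → (φ ^ m) v = 0 := by
    intro m hm
    have hmm : φ ^ m = φ ^ (m - k) * φ ^ k := by rw [← pow_add]; congr 1; omega
    rw [hmm, Module.End.mul_apply, h0, map_zero]
  have happ := congrArg (φ ^ (k - 1 - (j : ℕ))) hg
  rw [map_zero, map_sum] at happ
  have hterm : ∀ i : Fin k, (φ ^ (k - 1 - (j : ℕ))) (g i • (φ ^ (i : ℕ)) v)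
      = g i • (φ ^ (k - 1 - (j : ℕ) + (i : ℕ))) v := by
    intro i; rw [map_smul, ← Module.End.mul_apply, ← pow_add]
  rw [Finset.sum_congr rfl (fun i _ => hterm i)] at happ
  have hsum : ∑ i : Fin k, g i • (φ ^ (k - 1 - (j : ℕ) + (i : ℕ))) v
      = g j • (φ ^ (k - 1)) v := by
    rw [Finset.sum_eq_single j]
    · have hjk : (j : ℕ) < k := j.isLt
      have he : k - 1 - (j : ℕ) + (j : ℕ) = k - 1 := by omega
      rw [he]
    · intro i _ hij
      by_cases his : i ∈ s
      · have hji : (j : ℕ) < (i : ℕ) := by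
          have := hmin i his
          have hne' : (j : ℕ) ≠ (i : ℕ) := fun hc => hij (Fin.ext hc.symm)
          omega
        have hik : (i : ℕ) < k := i.isLt
        have hjk : (j : ℕ) < k := j.isLt
        rw [hbig _ (by omega), smul_zero]
      · have : g i = 0 := by simpa [hs] using his
        rw [this, zero_smul]
    · intro h; exact absurd (Finset.mem_univ j) h
  rw [hsum] at happ
  have hk0 : 0 < k := lt_of_le_of_lt (Nat.zero_le _) j.isLt
  rcases smul_eq_zero.mp happ with h | h
  · exact hgj h
  · exact h1 (k - 1) (by omega) h

lemma key_mem {K V : Type*} [Field K] [AddCommGroup V] [Module K V]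
    {Z W : Submodule K V} (hc : IsCompl Z W) (φ : Module.End K V)
    (hZ : ∀ z ∈ Z, φ z ∈ Z) (M : Module.End K W)
    (hM : ∀ w : W, φ (w : V) - (M w : V) ∈ Z) (j : ℕ) (x : V) :
    (φ ^ j) x - (((M ^ j) (W.linearProjOfIsCompl Z hc.symm x)) : V) ∈ Z := by
  induction j with
  | zero =>
    have h := Submodule.projection_add_projection_eq_self hc x
    have h2 : (φ ^ 0) x - (((M ^ 0) (W.linearProjOfIsCompl Z hc.symm x)) : V)
        = ((Z.linearProjOfIsCompl W hc x : V)) := by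
      simp only [pow_zero, Module.End.one_apply]
      exact sub_eq_iff_eq_add.2 h.symm
    rw [h2]; exact Submodule.coe_mem _
  | succ j ih =>
    set w := (M ^ j) (W.linearProjOfIsCompl Z hc.symm x) with hw
    have h2 : φ ((φ ^ j) x - (w : V)) ∈ Z := hZ _ ih
    have h3 : φ (w : V) - ((M w : V)) ∈ Z := hM w
    have h4 : (φ ^ (j + 1)) x - (((M ^ (j + 1)) (W.linearProjOfIsCompl Z hc.symm x)) : V)
        = φ ((φ ^ j) x - (w : V)) + (φ (w : V) - ((M w : V))) := by
      rw [pow_succ', pow_succ', Module.End.mul_apply, Module.End.mul_apply, map_sub, ← hw]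
      abel
    rw [h4]
    exact Z.add_mem h2 h3

end Aux

section Main

variable (Fq : Type) [Field Fq] [Fintype Fq] [DecidableEq Fq]

/-- The number of nilpotent endomorphisms of `Fq^m`. -/
noncomputable def nilCard (m : ℕ) : ℕ :=
  Nat.card {φ : Module.End Fq (Fin m → Fq) // IsNilpotent φ}

variable {Fq}

/-- The successor vector in a Krylov chain. -/
def nextVec {V : Type*} [AddCommGroup V] {k : ℕ} (u : Fin k → V) (i : Fin k) : V :=
  if h : (i : ℕ) + 1 < k then u ⟨(i : ℕ) + 1, h⟩ else 0

variable (Fq)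

lemma card_fiber {n k : ℕ} (hk : k ≤ n) (u : Fin k → (Fin n → Fq))
    (hu : LinearIndependent Fq u) :
    Nat.card {φ : Module.End Fq (Fin n → Fq) //
        IsNilpotent φ ∧ ∀ i : Fin k, φ (u i) = nextVec u i} =
      Fintype.card Fq ^ (k * (n - k)) * nilCard Fq (n - k) := by
  classical
  set Z : Submodule Fq (Fin n → Fq) := Submodule.span Fq (Set.range u) with hZdef
  obtain ⟨W, hc⟩ := Z.exists_isCompl
  set pZ := Z.linearProjOfIsCompl W hc with hpZ
  set pW := W.linearProjOfIsCompl Z hc.symm with hpW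
  have hpzw : ∀ x : (Fin n → Fq), (pZ x : (Fin n → Fq)) + (pW x : (Fin n → Fq)) = x :=
    fun x => Submodule.projection_add_projection_eq_self hc x
  have huZ : ∀ i, u i ∈ Z := fun i => Submodule.subset_span ⟨i, rfl⟩
  have hnextZ : ∀ i, nextVec u i ∈ Z := by
    intro i; unfold nextVec; split
    · exact huZ _
    · exact Z.zero_mem
  set bZ : Basis (Fin k) Fq Z := Basis.span hu with hbZdef
  have hbZ : ∀ i, (bZ i : (Fin n → Fq)) = u i := fun i => congrArg Subtype.val (Module.Basis.span_apply hu i)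
  have hrV : finrank Fq (Fin n → Fq) = n := by
    rw [Module.finrank_fintype_fun_eq_card, Fintype.card_fin]
  have hrZ : finrank Fq Z = k := by
    rw [hZdef, finrank_span_eq_card hu, Fintype.card_fin]
  have hrW : finrank Fq W = n - k := by
    have h := Submodule.finrank_add_eq_of_isCompl hc
    rw [hrZ, hrV] at h; omega
  -- projection facts
  have hpZu : ∀ i, pZ (u i) = bZ i := by
    intro i
    have h1 : pZ (u i) = ⟨u i, huZ i⟩ :=
      Submodule.linearProjOfIsCompl_apply_left hc ⟨u i, huZ i⟩
    rw [h1]; exact Subtype.ext (hbZ i).symm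
  have hpWu : ∀ i, pW (u i) = 0 :=
    fun i => Submodule.linearProjOfIsCompl_apply_right' hc.symm (huZ i)
  have hpZw : ∀ w : W, pZ (w : (Fin n → Fq)) = 0 :=
    fun w => Submodule.linearProjOfIsCompl_apply_right' hc w.2
  have hpWw : ∀ w : W, pW (w : (Fin n → Fq)) = w :=
    fun w => Submodule.linearProjOfIsCompl_apply_left hc.symm w
  have hpZZ : ∀ w : W, pW (w : (Fin n → Fq)) = w := hpWw
  have hpWz : ∀ z : Z, pW (z : (Fin n → Fq)) = 0 :=
    fun z => Submodule.linearProjOfIsCompl_apply_right' hc.symm z.2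
  have hpZself : ∀ z : Z, pZ (z : (Fin n → Fq)) = z :=
    fun z => Submodule.linearProjOfIsCompl_apply_left hc z
  -- shift map
  set shiftV : Z →ₗ[Fq] (Fin n → Fq) := (bZ.constr Fq) (fun i => nextVec u i) with hshiftdef
  have hshiftb : ∀ i, shiftV (bZ i) = nextVec u i := by
    intro i; rw [hshiftdef]; exact Basis.constr_basis bZ Fq _ i
  -- C-property consequences
  have hZmap : ∀ (φ : Module.End Fq (Fin n → Fq)), (∀ i, φ (u i) = nextVec u i) →
      ∀ z ∈ Z, φ z ∈ Z := by
    intro φ hC z hz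
    have hle : Z ≤ Submodule.comap φ Z := by
      rw [hZdef, Submodule.span_le]
      rintro _ ⟨i, rfl⟩
      simp only [SetLike.mem_coe, Submodule.mem_comap, hC]
      exact hnextZ i
    exact hle hz
  have hCpow : ∀ (φ : Module.End Fq (Fin n → Fq)), (∀ i, φ (u i) = nextVec u i) →
      ∀ (j : ℕ) (i : Fin k), k ≤ (i : ℕ) + j → (φ ^ j) (u i) = 0 := by
    intro φ hC j
    induction j with
    | zero => intro i hi; exfalso; have := i.isLt; omega
    | succ j ih =>
      intro i hi
      have h1 : (φ ^ (j + 1)) (u i) = (φ ^ j) (φ (u i)) := by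
        rw [pow_succ, Module.End.mul_apply]
      rw [h1, hC i]
      unfold nextVec
      split
      · exact ih _ (by simp only []; omega)
      · rw [map_zero]
  have hkerZ : ∀ (φ : Module.End Fq (Fin n → Fq)), (∀ i, φ (u i) = nextVec u i) →
      ∀ z ∈ Z, (φ ^ k) z = 0 := by
    intro φ hC z hz
    have hle : Z ≤ LinearMap.ker (φ ^ k) := by
      rw [hZdef, Submodule.span_le]
      rintro _ ⟨i, rfl⟩
      simp only [SetLike.mem_coe, LinearMap.mem_ker]
      exact hCpow φ hC k i (by have := i.isLt; omega)
    simpa using hle hz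
  -- forward nilpotency
  have hMrelF : ∀ (φ : Module.End Fq (Fin n → Fq)) (w : W),
      φ (w : (Fin n → Fq)) - (((pW ∘ₗ φ ∘ₗ W.subtype) w : W) : (Fin n → Fq)) ∈ Z := by
    intro φ w
    have h2 : φ (w : (Fin n → Fq)) - ((pW (φ (w : (Fin n → Fq))) : (Fin n → Fq))) = ((pZ (φ (w : (Fin n → Fq)))) : (Fin n → Fq)) := by
      have := hpzw (φ (w : (Fin n → Fq)))
      exact sub_eq_iff_eq_add.2 this.symm
    simp only [LinearMap.comp_apply, Submodule.subtype_apply]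
    rw [h2]
    exact Submodule.coe_mem _
  have hMnil : ∀ (φ : Module.End Fq (Fin n → Fq)), (∀ i, φ (u i) = nextVec u i) → IsNilpotent φ →
      IsNilpotent (pW ∘ₗ φ ∘ₗ W.subtype) := by
    intro φ hC hφ
    obtain ⟨a, ha⟩ := hφ
    refine ⟨a, ?_⟩
    refine LinearMap.ext fun w => ?_
    have hkey := key_mem hc φ (hZmap φ hC) (pW ∘ₗ φ ∘ₗ W.subtype) (hMrelF φ) a (w : (Fin n → Fq))
    rw [ha] at hkey
    rw [hpWw w] at hkey
    simp only [LinearMap.zero_apply, zero_sub, neg_mem_iff] at hkey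
    have h0 : ((((pW ∘ₗ φ ∘ₗ W.subtype) ^ a) w : W) : (Fin n → Fq)) = 0 :=
      Submodule.disjoint_def.mp hc.disjoint _ hkey (Submodule.coe_mem _)
    rw [LinearMap.zero_apply]
    exact (ZeroMemClass.coe_eq_zero).mp h0
  -- backward facts
  have hCback : ∀ (B : W →ₗ[Fq] Z) (M : Module.End Fq W) (i : Fin k),
      (shiftV ∘ₗ (pZ : (Fin n → Fq) →ₗ[Fq] Z) + Z.subtype ∘ₗ B ∘ₗ pW + W.subtype ∘ₗ M ∘ₗ pW) (u i)
        = nextVec u i := by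
    intro B M i
    simp only [LinearMap.add_apply, LinearMap.comp_apply, hpZu i, hpWu i, map_zero,
      Submodule.coe_zero, add_zero, hshiftb i]
  have hWrel : ∀ (B : W →ₗ[Fq] Z) (M : Module.End Fq W) (w : W),
      (shiftV ∘ₗ (pZ : (Fin n → Fq) →ₗ[Fq] Z) + Z.subtype ∘ₗ B ∘ₗ pW + W.subtype ∘ₗ M ∘ₗ pW) (w : (Fin n → Fq))
        = (B w : (Fin n → Fq)) + (M w : (Fin n → Fq)) := by
    intro B M w
    simp only [LinearMap.add_apply, LinearMap.comp_apply, hpZw w, hpWw w, map_zero,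
      Submodule.coe_zero, zero_add, Submodule.subtype_apply]
  have hnilback : ∀ (B : W →ₗ[Fq] Z) (M : Module.End Fq W), IsNilpotent M →
      IsNilpotent (shiftV ∘ₗ (pZ : (Fin n → Fq) →ₗ[Fq] Z) + Z.subtype ∘ₗ B ∘ₗ pW + W.subtype ∘ₗ M ∘ₗ pW) := by
    intro B M hM
    obtain ⟨a, ha⟩ := hM
    set φ := shiftV ∘ₗ (pZ : (Fin n → Fq) →ₗ[Fq] Z) + Z.subtype ∘ₗ B ∘ₗ pW + W.subtype ∘ₗ M ∘ₗ pW with hφdef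
    have hC : ∀ i, φ (u i) = nextVec u i := hCback B M
    have hMrel : ∀ w : W, φ (w : (Fin n → Fq)) - (M w : (Fin n → Fq)) ∈ Z := by
      intro w
      rw [hWrel B M w]
      simpa using Submodule.coe_mem (B w)
    refine ⟨k + a, ?_⟩
    refine LinearMap.ext fun x => ?_
    have hkey := key_mem hc φ (hZmap φ hC) M hMrel a x
    rw [ha] at hkey
    simp only [LinearMap.zero_apply, Submodule.coe_zero, sub_zero] at hkey
    have h1 : (φ ^ (k + a)) x = (φ ^ k) ((φ ^ a) x) := by
      rw [pow_add, Module.End.mul_apply]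
    rw [LinearMap.zero_apply, h1]
    exact hkerZ φ hC _ hkey
  -- the equivalence
  have hagree : ∀ (φ : Module.End Fq (Fin n → Fq)), (∀ i, φ (u i) = nextVec u i) →
      shiftV = φ ∘ₗ Z.subtype := by
    intro φ hC
    refine bZ.ext (fun i => ?_)
    rw [hshiftb i, LinearMap.comp_apply, Submodule.subtype_apply, hbZ i, hC i]
  let E : {φ : Module.End Fq (Fin n → Fq) // IsNilpotent φ ∧ ∀ i : Fin k, φ (u i) = nextVec u i} ≃
      ((W →ₗ[Fq] Z) × {M : Module.End Fq W // IsNilpotent M}) :=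
  { toFun := fun φp => ⟨pZ ∘ₗ φp.1 ∘ₗ W.subtype,
      ⟨pW ∘ₗ φp.1 ∘ₗ W.subtype, hMnil φp.1 φp.2.2 φp.2.1⟩⟩
    invFun := fun BM => ⟨shiftV ∘ₗ (pZ : (Fin n → Fq) →ₗ[Fq] Z) + Z.subtype ∘ₗ BM.1 ∘ₗ pW
        + W.subtype ∘ₗ BM.2.1 ∘ₗ pW,
      hnilback BM.1 BM.2.1 BM.2.2, hCback BM.1 BM.2.1⟩
    left_inv := by
      rintro ⟨φ, hnil, hC⟩
      apply Subtype.ext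
      simp only []
      apply LinearMap.ext
      intro x
      have h1 : (shiftV ∘ₗ (pZ : (Fin n → Fq) →ₗ[Fq] Z) + Z.subtype ∘ₗ (pZ ∘ₗ φ ∘ₗ W.subtype) ∘ₗ pW
          + W.subtype ∘ₗ (pW ∘ₗ φ ∘ₗ W.subtype) ∘ₗ pW) x
          = shiftV (pZ x) + ((pZ (φ (pW x : (Fin n → Fq))) : (Fin n → Fq)) + (pW (φ (pW x : (Fin n → Fq))) : (Fin n → Fq))) := by
        simp only [LinearMap.add_apply, LinearMap.comp_apply, Submodule.subtype_apply]
        abel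
      rw [h1, hpzw (φ (pW x : (Fin n → Fq))), hagree φ hC]
      simp only [LinearMap.comp_apply, Submodule.subtype_apply]
      rw [← map_add, hpzw x]
    right_inv := by
      rintro ⟨B, M, hM⟩
      have h1 : ∀ w : W, pZ ((B w : (Fin n → Fq)) + (M w : (Fin n → Fq))) = B w := by
        intro w
        rw [map_add, hpZself (B w), hpZw (M w), add_zero]
      have h2 : ∀ w : W, pW ((B w : (Fin n → Fq)) + (M w : (Fin n → Fq))) = M w := by
        intro w
        rw [map_add, hpWz (B w), hpWw (M w), zero_add]
      refine Prod.ext ?_ ?_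
      · apply LinearMap.ext
        intro w
        simp only [LinearMap.comp_apply, Submodule.subtype_apply]
        rw [hWrel B M w]
        exact h1 w
      · apply Subtype.ext
        apply LinearMap.ext
        intro w
        simp only [LinearMap.comp_apply, Submodule.subtype_apply]
        rw [hWrel B M w]
        exact h2 w }
  rw [Nat.card_congr E, Nat.card_prod]
  congr 1
  · -- card of Hom(W, Z)
    set bW : Basis (Fin (n - k)) Fq W := Module.finBasisOfFinrankEq Fq W hrW with hbW
    have e := LinearMap.toMatrix bW bZ
    rw [Nat.card_congr (e.toEquiv.trans (Matrix.of (m := Fin k) (n := Fin (n - k))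
      (α := Fq)).symm)]
    rw [Nat.card_eq_fintype_card, Fintype.card_fun, Fintype.card_fun, Fintype.card_fin,
      Fintype.card_fin, ← pow_mul, mul_comm (n - k) k]
  · -- card of nilpotent endos of W
    set bW : Basis (Fin (n - k)) Fq W := Module.finBasisOfFinrankEq Fq W hrW with hbW
    have A : Module.End Fq W ≃ₐ[Fq] Module.End Fq (Fin (n - k) → Fq) :=
      (LinearMap.toMatrixAlgEquiv bW).trans (Matrix.toLinAlgEquiv'
        (R := Fq) (n := Fin (n - k)))
    rw [nilCard]
    refine Nat.card_congr (Equiv.subtypeEquiv A.toEquiv (fun φ => ?_))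
    constructor
    · rintro ⟨m, hm⟩
      exact ⟨m, show (A φ) ^ m = 0 by rw [← map_pow, hm, map_zero]⟩
    · rintro ⟨m, hm⟩
      refine ⟨m, ?_⟩
      have h2 : A (φ ^ m) = A 0 := by rw [map_pow, map_zero]; exact hm
      exact A.injective h2

lemma nilCard_rec (n : ℕ) :
    nilCard Fq n * Fintype.card Fq ^ n =
      ∑ k ∈ Finset.range (n + 1),
        (∏ i ∈ Finset.range k, (Fintype.card Fq ^ n - Fintype.card Fq ^ i)) *
          (Fintype.card Fq ^ (k * (n - k)) * nilCard Fq (n - k)) := by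
  classical
  have hrV : finrank Fq (Fin n → Fq) = n := by
    rw [Module.finrank_fintype_fun_eq_card, Fintype.card_fin]
  have hphin : ∀ p : ({φ : Module.End Fq (Fin n → Fq) // IsNilpotent φ} × (Fin n → Fq)),
      ((p.1.1 : Module.End Fq (Fin n → Fq)) ^ n) p.2 = 0 := by
    intro p
    have h := end_pow_finrank p.1.2
    rw [hrV] at h
    rw [h, LinearMap.zero_apply]
  have hex : ∀ p : ({φ : Module.End Fq (Fin n → Fq) // IsNilpotent φ} × (Fin n → Fq)),
      ∃ j, ((p.1.1 : Module.End Fq (Fin n → Fq)) ^ j) p.2 = 0 :=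
    fun p => ⟨n, hphin p⟩
  have hκle : ∀ p, Nat.find (hex p) ≤ n := fun p => Nat.find_le (hphin p)
  have hcardS : Nat.card ({φ : Module.End Fq (Fin n → Fq) // IsNilpotent φ} × (Fin n → Fq))
      = nilCard Fq n * Fintype.card Fq ^ n := by
    rw [Nat.card_prod]
    congr 1
    rw [Nat.card_eq_fintype_card, Fintype.card_fun, Fintype.card_fin]
  rw [← hcardS]
  rw [natCard_fiberwise (fun p : ({φ : Module.End Fq (Fin n → Fq) // IsNilpotent φ}
    × (Fin n → Fq)) => (⟨Nat.find (hex p), by have := hκle p; omega⟩ : Fin (n + 1)))]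
  have hstep1 : ∀ m : Fin (n + 1),
      Nat.card {p : ({φ : Module.End Fq (Fin n → Fq) // IsNilpotent φ} × (Fin n → Fq)) //
          (⟨Nat.find (hex p), by have := hκle p; omega⟩ : Fin (n + 1)) = m}
        = Nat.card {p : ({φ : Module.End Fq (Fin n → Fq) // IsNilpotent φ} × (Fin n → Fq)) //
          Nat.find (hex p) = (m : ℕ)} := by
    intro m
    refine Nat.card_congr (Equiv.subtypeEquivRight fun p => ?_)
    constructor
    · intro h; rw [← h]
    · intro h; exact Fin.ext h
  rw [Finset.sum_congr rfl (fun m _ => hstep1 m)]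
  rw [Fin.sum_univ_eq_sum_range (fun m =>
    Nat.card {p : ({φ : Module.End Fq (Fin n → Fq) // IsNilpotent φ} × (Fin n → Fq)) //
      Nat.find (hex p) = m}) (n + 1)]
  refine Finset.sum_congr rfl (fun k hk => ?_)
  have hkn : k ≤ n := by rw [Finset.mem_range] at hk; omega
  rw [natCard_fiberwise (fun pp : {p : ({φ : Module.End Fq (Fin n → Fq) // IsNilpotent φ}
      × (Fin n → Fq)) // Nat.find (hex p) = k} =>
    (fun i : Fin k => ((pp.1.1.1 : Module.End Fq (Fin n → Fq)) ^ (i : ℕ)) pp.1.2))]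
  have hfib : ∀ w : Fin k → (Fin n → Fq),
      Nat.card {pp : {p : ({φ : Module.End Fq (Fin n → Fq) // IsNilpotent φ}
          × (Fin n → Fq)) // Nat.find (hex p) = k} //
          (fun i : Fin k => ((pp.1.1.1 : Module.End Fq (Fin n → Fq)) ^ (i : ℕ)) pp.1.2) = w}
        = if LinearIndependent Fq w then
            Fintype.card Fq ^ (k * (n - k)) * nilCard Fq (n - k) else 0 := by
    intro w
    have hCof : ∀ pp : {p : ({φ : Module.End Fq (Fin n → Fq) // IsNilpotent φ}
        × (Fin n → Fq)) // Nat.find (hex p) = k},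
        ((fun i : Fin k => ((pp.1.1.1 : Module.End Fq (Fin n → Fq)) ^ (i : ℕ)) pp.1.2) = w) →
        ∀ i : Fin k, pp.1.1.1 (w i) = nextVec w i := by
      rintro ⟨p, hκp⟩ htup i
      have hsp : ((p.1.1 : Module.End Fq (Fin n → Fq)) ^ k) p.2 = 0 := by
        have h := Nat.find_spec (hex p)
        rwa [hκp] at h
      have htup' : ∀ i : Fin k, ((p.1.1 : Module.End Fq (Fin n → Fq)) ^ (i : ℕ)) p.2 = w i :=
        fun i => congrFun htup i
      have h1 : p.1.1 (w i) = ((p.1.1 : Module.End Fq (Fin n → Fq)) ^ ((i : ℕ) + 1)) p.2 := by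
        rw [← htup' i, ← Module.End.mul_apply, ← pow_succ']
      rw [h1]
      unfold nextVec
      split
      · next h => exact htup' ⟨(i : ℕ) + 1, h⟩
      · next h =>
        have h2 : (i : ℕ) + 1 = k := by have := i.isLt; omega
        rw [h2]; exact hsp
    split_ifs with hw
    · -- linearly independent case
      set vOf : Fin n → Fq := if h : 0 < k then w ⟨0, h⟩ else 0 with hvOf
      have hiter : ∀ (φ : Module.End Fq (Fin n → Fq)),
          (∀ i : Fin k, φ (w i) = nextVec w i) →
          ∀ (m : ℕ) (hm : m < k), (φ ^ m) vOf = w ⟨m, hm⟩ := by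
        intro φ hC m
        induction m with
        | zero =>
          intro hm
          rw [pow_zero, Module.End.one_apply, hvOf, dif_pos hm]
        | succ m ih =>
          intro hm
          have hmk : m < k := by omega
          have h1 : (φ ^ (m + 1)) vOf = φ ((φ ^ m) vOf) := by
            rw [pow_succ', Module.End.mul_apply]
          rw [h1, ih hmk, hC ⟨m, hmk⟩]
          unfold nextVec
          simp only []
          rw [dif_pos (show m + 1 < k from hm)]
      have hfind : ∀ (φ : Module.End Fq (Fin n → Fq)) (hnil : IsNilpotent φ),
          (∀ i : Fin k, φ (w i) = nextVec w i) →
          Nat.find (hex ⟨⟨φ, hnil⟩, vOf⟩) = k := by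
        intro φ hnil hC
        rw [Nat.find_eq_iff]
        constructor
        · rcases Nat.eq_zero_or_pos k with rfl | hk0
          · rw [pow_zero, Module.End.one_apply]
            rw [hvOf, dif_neg (by omega)]
          · have h1 : (φ ^ k) vOf = φ ((φ ^ (k - 1)) vOf) := by
              have hkk : k - 1 + 1 = k := by omega
              rw [← Module.End.mul_apply, ← pow_succ', hkk]
            rw [h1, hiter φ hC (k - 1) (by omega), hC ⟨k - 1, by omega⟩]
            unfold nextVec
            split
            · next h => exact absurd h (show ¬(k - 1 + 1 < k) by omega)
            · rfl
        · intro j hj h0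
          have h1 := hiter φ hC j hj
          rw [h1] at h0
          exact hw.ne_zero ⟨j, hj⟩ h0
      rw [← card_fiber Fq hkn w hw]
      refine Nat.card_congr (Equiv.ofBijective
        (fun pp => ⟨pp.1.1.1.1, pp.1.1.1.2, hCof pp.1 pp.2⟩) ⟨?_, ?_⟩)
      · -- injective
        rintro ⟨⟨p₁, hκ₁⟩, ht₁⟩ ⟨⟨p₂, hκ₂⟩, ht₂⟩ heq
        have hφ : p₁.1.1 = p₂.1.1 := by
          have h' := congrArg Subtype.val heq
          simpa using h'
        have hv : ∀ (p : ({φ : Module.End Fq (Fin n → Fq) // IsNilpotent φ} × (Fin n → Fq)))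
            (hκp : Nat.find (hex p) = k),
            ((fun i : Fin k => ((p.1.1 : Module.End Fq (Fin n → Fq)) ^ (i : ℕ)) p.2) = w) →
            p.2 = vOf := by
          intro p hκp htup
          rcases Nat.eq_zero_or_pos k with hk0 | hk0
          · have h := Nat.find_spec (hex p)
            rw [hκp, hk0, pow_zero, Module.End.one_apply] at h
            rw [hvOf, dif_neg (by omega), h]
          · have h := congrFun htup ⟨0, hk0⟩
            simp only [pow_zero, Module.End.one_apply] at h
            rw [hvOf, dif_pos hk0, h]
        apply Subtype.ext
        apply Subtype.ext
        apply Prod.ext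
        · exact Subtype.ext hφ
        · rw [hv p₁ hκ₁ ht₁, hv p₂ hκ₂ ht₂]
      · -- surjective
        rintro ⟨φ, hnil, hC⟩
        refine ⟨⟨⟨⟨⟨φ, hnil⟩, vOf⟩, hfind φ hnil hC⟩, ?_⟩, rfl⟩
        funext i
        exact hiter φ hC (i : ℕ) i.isLt
    · -- dependent case: empty
      have hE : IsEmpty {pp : {p : ({φ : Module.End Fq (Fin n → Fq) // IsNilpotent φ}
          × (Fin n → Fq)) // Nat.find (hex p) = k} //
          (fun i : Fin k => ((pp.1.1.1 : Module.End Fq (Fin n → Fq)) ^ (i : ℕ)) pp.1.2) = w} := by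
        refine ⟨fun pp => hw ?_⟩
        obtain ⟨⟨p, hκp⟩, htup⟩ := pp
        have h0 : ((p.1.1 : Module.End Fq (Fin n → Fq)) ^ k) p.2 = 0 := by
          have h := Nat.find_spec (hex p)
          rwa [hκp] at h
        have h1 : ∀ j < k, ((p.1.1 : Module.End Fq (Fin n → Fq)) ^ j) p.2 ≠ 0 :=
          fun j hj => Nat.find_min (hex p) (by omega)
        have hli := krylov_indep h0 h1
        rwa [htup] at hli
      exact Nat.card_of_isEmpty
  rw [Finset.sum_congr rfl (fun w _ => hfib w)]
  rw [Finset.sum_ite, Finset.sum_const_zero, add_zero, Finset.sum_const, smul_eq_mul]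
  congr 1
  have hcl := card_linearIndependent (K := Fq) (V := Fin n → Fq) (k := k) (by rw [hrV]; exact hkn)
  rw [Nat.card_eq_fintype_card, Fintype.card_subtype] at hcl
  rw [hcl, hrV]
  exact (Finset.prod_range (fun i => Fintype.card Fq ^ n - Fintype.card Fq ^ i)).symm ▸
    (Fin.prod_univ_eq_prod_range (fun i => Fintype.card Fq ^ n - Fintype.card Fq ^ i) k)

lemma q_identity {q : ℕ} (hq : 1 < q) (n : ℕ) :
    ∀ d j, j + d = n →
      ∑ k ∈ Finset.Ico j (n + 1),
          (∏ i ∈ Finset.range k, (q ^ n - q ^ i)) * q ^ ((n - 1) * (n - k))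
        = (∏ i ∈ Finset.range j, (q ^ n - q ^ i)) * q ^ (n * (n - j)) := by
  intro d
  induction d with
  | zero =>
    intro j hj
    have hjn : j = n := by omega
    subst hjn
    rw [Nat.Ico_succ_singleton, Finset.sum_singleton, Nat.sub_self]
    simp
  | succ d ih =>
    intro j hj
    have hjn : j < n := by omega
    rw [Finset.sum_eq_sum_Ico_succ_bot (show j < n + 1 by omega), ih (j + 1) (by omega),
      Finset.prod_range_succ]
    have h5 : n - (j + 1) + 1 = n - j := by omega
    have hQP : n * (n - (j + 1)) + n = n * (n - j) := by
      calc n * (n - (j + 1)) + n = n * ((n - (j + 1)) + 1) := by ring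
        _ = n * (n - j) := by rw [h5]
    have hRP : (n - 1) * (n - j) + (n - j) = n * (n - j) := by
      have h6 : (n - 1) + 1 = n := by omega
      calc (n - 1) * (n - j) + (n - j) = ((n - 1) + 1) * (n - j) := by ring
        _ = n * (n - j) := by rw [h6]
    have E1 : n + n * (n - (j + 1)) = n * (n - j) := by omega
    have E2 : j + n * (n - (j + 1)) = (n - 1) * (n - j) := by omega
    have key : q ^ ((n - 1) * (n - j)) + (q ^ n - q ^ j) * q ^ (n * (n - (j + 1)))
        = q ^ (n * (n - j)) := by
      have hle : q ^ j ≤ q ^ n := Nat.pow_le_pow_right (by omega) (by omega)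
      have h7 : (q ^ n - q ^ j) * q ^ (n * (n - (j + 1)))
          = q ^ (n * (n - j)) - q ^ ((n - 1) * (n - j)) := by
        rw [Nat.sub_mul, ← pow_add, ← pow_add, E1, E2]
      have hle2 : q ^ ((n - 1) * (n - j)) ≤ q ^ (n * (n - j)) :=
        Nat.pow_le_pow_right (by omega) (by omega)
      omega
    calc (∏ i ∈ Finset.range j, (q ^ n - q ^ i)) * q ^ ((n - 1) * (n - j))
          + ((∏ i ∈ Finset.range j, (q ^ n - q ^ i)) * (q ^ n - q ^ j)) * q ^ (n * (n - (j + 1)))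
        = (∏ i ∈ Finset.range j, (q ^ n - q ^ i)) *
            (q ^ ((n - 1) * (n - j)) + (q ^ n - q ^ j) * q ^ (n * (n - (j + 1)))) := by ring
      _ = (∏ i ∈ Finset.range j, (q ^ n - q ^ i)) * q ^ (n * (n - j)) := by rw [key]

lemma nilCard_eq (n : ℕ) : nilCard Fq n = Fintype.card Fq ^ (n * (n - 1)) := by
  induction n using Nat.strong_induction_on with
  | _ n IH =>
  rcases Nat.eq_zero_or_pos n with rfl | hn
  · rw [nilCard]
    haveI : Unique {φ : Module.End Fq (Fin 0 → Fq) // IsNilpotent φ} :=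
      uniqueOfSubsingleton ⟨0, ⟨1, by simp⟩⟩
    rw [Nat.card_unique]
    simp
  · set q := Fintype.card Fq with hqdef
    have hq1 : 1 < q := Fintype.one_lt_card
    have hrec := nilCard_rec Fq n
    rw [← hqdef] at hrec
    have hIH : ∀ k, 1 ≤ k → k ≤ n →
        (∏ i ∈ Finset.range k, (q ^ n - q ^ i)) * (q ^ (k * (n - k)) * nilCard Fq (n - k))
          = (∏ i ∈ Finset.range k, (q ^ n - q ^ i)) * q ^ ((n - 1) * (n - k)) := by
      intro k hk1 hk2
      have hk : 1 ≤ k ∧ k < n + 1 := ⟨hk1, by omega⟩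
      have h1 : nilCard Fq (n - k) = q ^ ((n - k) * (n - k - 1)) := IH (n - k) (by omega)
      rw [h1, ← pow_add]
      congr 2
      rcases Nat.eq_zero_or_pos (n - k) with h0 | h0
      · rw [h0]; simp
      · have h3 : k + (n - k - 1) = n - 1 := by omega
        calc k * (n - k) + (n - k) * (n - k - 1)
            = (k + (n - k - 1)) * (n - k) := by ring
          _ = (n - 1) * (n - k) := by rw [h3]
    rw [Finset.sum_range_succ'] at hrec
    have hgh : ∑ i ∈ Finset.range n,
        (∏ j ∈ Finset.range (i + 1), (q ^ n - q ^ j)) *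
          (q ^ ((i + 1) * (n - (i + 1))) * nilCard Fq (n - (i + 1)))
        = ∑ i ∈ Finset.range n,
        (∏ j ∈ Finset.range (i + 1), (q ^ n - q ^ j)) * q ^ ((n - 1) * (n - (i + 1))) :=
      Finset.sum_congr rfl fun i hi => hIH (i + 1) (by omega)
        (by rw [Finset.mem_range] at hi; omega)
    rw [hgh] at hrec
    simp only [Finset.range_zero, Finset.prod_empty, one_mul, Nat.zero_mul, Nat.sub_zero,
      pow_zero] at hrec
    have hid := q_identity hq1 n n 0 (by omega)
    rw [← Finset.range_eq_Ico, Finset.sum_range_succ'] at hid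
    simp only [Finset.range_zero, Finset.prod_empty, one_mul, Nat.mul_zero, Nat.sub_zero,
      pow_zero, mul_one] at hid
    have hcomm : q ^ ((n - 1) * n) = q ^ (n * (n - 1)) := by rw [Nat.mul_comm]
    have hBQ : q ^ (n * n) = q ^ (n * (n - 1)) * q ^ n := by
      rw [← pow_add]
      congr 1
      have h4 : n - 1 + 1 = n := by omega
      calc n * n = n * ((n - 1) + 1) := by rw [h4]
        _ = n * (n - 1) + n := by ring
    have hfin : nilCard Fq n * q ^ n + q ^ (n * (n - 1))
        = nilCard Fq n + q ^ (n * (n - 1)) * q ^ n := by omega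
    have hQ : 1 < q ^ n := Nat.one_lt_pow (by omega) hq1
    have hcast : (nilCard Fq n : ℤ) * (q : ℤ) ^ n + (q : ℤ) ^ (n * (n - 1))
        = nilCard Fq n + (q : ℤ) ^ (n * (n - 1)) * (q : ℤ) ^ n := by exact_mod_cast hfin
    have hQZ : (1 : ℤ) < (q : ℤ) ^ n := by exact_mod_cast hQ
    have h2 : ((nilCard Fq n : ℤ) - (q : ℤ) ^ (n * (n - 1))) * ((q : ℤ) ^ n - 1) = 0 := by
      linear_combination hcast
    rcases mul_eq_zero.mp h2 with h3 | h3
    · have h4 : (nilCard Fq n : ℤ) = (q : ℤ) ^ (n * (n - 1)) := by linarith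
      exact_mod_cast h4
    · exfalso; linarith

lemma matrix_nil_card (n : ℕ) :
    Nat.card {N : Matrix (Fin n) (Fin n) Fq // N ^ n = 0} = nilCard Fq n := by
  rw [nilCard]
  refine Nat.card_congr (Equiv.subtypeEquiv (Matrix.toLinAlgEquiv'
    (R := Fq) (n := Fin n)).toEquiv fun N => ?_)
  constructor
  · intro h
    exact ⟨n, show (Matrix.toLinAlgEquiv' N) ^ n = 0 by rw [← map_pow, h, map_zero]⟩
  · intro h
    have h2 : (Matrix.toLinAlgEquiv' (R := Fq) N) ^ n = 0 := by
      have h3 := end_pow_finrank (show IsNilpotent (Matrix.toLinAlgEquiv' (R := Fq) N) from h)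
      rwa [show finrank Fq (Fin n → Fq) = n by
        rw [Module.finrank_fintype_fun_eq_card, Fintype.card_fin]] at h3
    have h4 : Matrix.toLinAlgEquiv' (R := Fq) (N ^ n) = Matrix.toLinAlgEquiv' (R := Fq) 0 := by
      rw [map_pow, map_zero]; exact h2
    exact (Matrix.toLinAlgEquiv' (R := Fq)).injective h4

end Main

/-- (Steinberg) The number of unipotent elements of `GL(n,q)` is `q^(n(n-1))`:
an element `α` is unipotent iff `(α - I)ⁿ = 0`. -/
theorem card_unipotent_GL (Fq : Type) [Field Fq] [Fintype Fq] [DecidableEq Fq]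
    (q : ℕ) (hq : q = Fintype.card Fq) (n : ℕ) :
    Nat.card {α : Matrix.GeneralLinearGroup (Fin n) Fq //
        ((α : Matrix (Fin n) (Fin n) Fq) - 1) ^ n = 0} = q ^ (n * (n - 1)) := by
  subst hq
  have E1 : {α : Matrix.GeneralLinearGroup (Fin n) Fq //
      ((α : Matrix (Fin n) (Fin n) Fq) - 1) ^ n = 0}
      ≃ {N : Matrix (Fin n) (Fin n) Fq // N ^ n = 0} :=
  { toFun := fun α => ⟨(α.1 : Matrix (Fin n) (Fin n) Fq) - 1, α.2⟩
    invFun := fun N => ⟨(IsNilpotent.isUnit_add_one (⟨n, N.2⟩ : IsNilpotent N.1)).unit, by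
      rw [IsUnit.unit_spec]
      simpa using N.2⟩
    left_inv := fun α => by
      apply Subtype.ext
      apply Units.ext
      simp [IsUnit.unit_spec]
    right_inv := fun N => by
      apply Subtype.ext
      simp [IsUnit.unit_spec] }
  rw [Nat.card_congr E1, matrix_nil_card, nilCard_eq]
end

section
/- Let λ be a partition with mᵢ = mᵢ(λ) and dᵢ(λ) = Σ_{h<i} h·mₕ + i·(mᵢ + m_{i+1} + ···). Then Πᵢ Π_{t=1}^{mᵢ} (q^(dᵢ) - q^(dᵢ - t)) = q^(Σᵢ (λ'ᵢ)²) · Πᵢ (1/q)_{mᵢ}, for any real q > 0. -/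
/-- `conj m i = λ'ᵢ = mᵢ + m_{i+1} + ⋯` for a partition with multiplicities `m`. -/
def conj (m : ℕ →₀ ℕ) (i : ℕ) : ℕ :=
  ∑ j ∈ m.support.filter (fun j => i ≤ j), m j

/-- `dd m i = dᵢ(λ) = ∑_{h<i} h·mₕ + i·(mᵢ + m_{i+1} + ⋯)`. -/
def dd (m : ℕ →₀ ℕ) (i : ℕ) : ℕ :=
  (∑ h ∈ Finset.range i, h * m h) + i * conj m i

lemma conj_eq_sum_Icc (m : ℕ →₀ ℕ) (K : ℕ) (hK : ∀ j ∈ m.support, j ≤ K) (i : ℕ) :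
    conj m i = ∑ j ∈ Finset.Icc i K, m j := by
  unfold conj
  apply Finset.sum_subset
  · intro j hj
    simp only [Finset.mem_filter, Finset.mem_Icc] at *
    exact ⟨hj.2, hK j hj.1⟩
  · intro j hj hj2
    by_contra h
    exact hj2 (Finset.mem_filter.2 ⟨Finsupp.mem_support_iff.2 h, (Finset.mem_Icc.1 hj).1⟩)

lemma conj_succ (m : ℕ →₀ ℕ) (i : ℕ) : conj m i = m i + conj m (i + 1) := by
  have hK : ∀ j ∈ m.support, j ≤ m.support.sup id := fun j hj => Finset.le_sup (f := id) hj
  rw [conj_eq_sum_Icc m _ hK, conj_eq_sum_Icc m _ hK]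
  rcases le_or_gt i (m.support.sup id) with h | h
  · rw [Finset.Icc_eq_cons_Ioc h, Finset.sum_cons, Finset.Icc_add_one_left_eq_Ioc]
  · rw [Finset.Icc_eq_empty (by omega), Finset.Icc_eq_empty (by omega)]
    have : m i = 0 := by
      by_contra hc
      exact absurd (hK i (Finsupp.mem_support_iff.2 hc)) (by omega)
    simp [this]

lemma dd_succ (m : ℕ →₀ ℕ) (N : ℕ) : dd m (N + 1) = dd m N + conj m (N + 1) := by
  unfold dd
  rw [Finset.sum_range_succ, conj_succ m N]
  ring

lemma sum_md (m : ℕ →₀ ℕ) (hm : m 0 = 0) (N : ℕ) :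
    (∑ i ∈ Finset.range N, m i * dd m i) + conj m N * dd m N
      = ∑ i ∈ Finset.range N, (conj m (i + 1)) ^ 2 := by
  induction N with
  | zero => simp [dd]
  | succ N ih =>
    rw [Finset.sum_range_succ, Finset.sum_range_succ, ← ih, dd_succ, conj_succ m N]
    ring

lemma inner_prod (q : ℝ) (hq : 0 < q) (d k : ℕ) :
    ∏ t ∈ Finset.Icc 1 k, (q ^ (d : ℤ) - q ^ ((d : ℤ) - (t : ℤ)))
      = q ^ (k * d) * ∏ t ∈ Finset.Icc 1 k, (1 - (1 / q) ^ t) := by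
  have hq0 : q ≠ 0 := ne_of_gt hq
  have key : ∀ t : ℕ, q ^ (d : ℤ) - q ^ ((d : ℤ) - (t : ℤ))
      = q ^ (d : ℕ) * (1 - (1 / q) ^ t) := by
    intro t
    rw [zpow_sub₀ hq0, zpow_natCast, zpow_natCast]
    field_simp
    ring_nf
    rw [← mul_pow, mul_inv_cancel₀ hq0, one_pow]
    ring
  simp_rw [key]
  rw [Finset.prod_mul_distrib, Finset.prod_const, Nat.card_Icc, ← pow_mul]
  rw [Nat.add_sub_cancel, Nat.mul_comm]

/-- For a partition `λ` with multiplicities `mᵢ` and any real `q > 0`: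
`∏ᵢ ∏_{t=1}^{mᵢ} (q^(dᵢ) - q^(dᵢ-t)) = q^(∑ᵢ(λ'ᵢ)²) · ∏ᵢ (1/q)_{mᵢ}`. -/
theorem kung_centralizer_identity (q : ℝ) (hq : 0 < q) (m : ℕ →₀ ℕ) (hm : m 0 = 0) :
    ∏ᶠ i : ℕ, ∏ t ∈ Finset.Icc 1 (m i),
        (q ^ (dd m i : ℤ) - q ^ ((dd m i : ℤ) - (t : ℤ))) =
      q ^ (∑ᶠ i : ℕ, (conj m (i + 1)) ^ 2) *
        ∏ᶠ i : ℕ, ∏ j ∈ Finset.Icc 1 (m i), (1 - (1 / q) ^ j) := by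
  classical
  set K := m.support.sup id with hKdef
  have hbound : ∀ j ∈ m.support, j ≤ K := fun j hj => Finset.le_sup (f := id) hj
  have hmzero : ∀ i, K < i → m i = 0 := by
    intro i hi
    by_contra h
    exact absurd (hbound i (Finsupp.mem_support_iff.2 h)) (by omega)
  have hczero : ∀ i, K < i → conj m i = 0 := by
    intro i hi
    rw [conj_eq_sum_Icc m K hbound, Finset.Icc_eq_empty (by omega), Finset.sum_empty]
  set N := K + 1 with hNdef
  have h1 : (∏ᶠ i : ℕ, ∏ t ∈ Finset.Icc 1 (m i),
        (q ^ (dd m i : ℤ) - q ^ ((dd m i : ℤ) - (t : ℤ))))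
      = ∏ i ∈ Finset.range N, ∏ t ∈ Finset.Icc 1 (m i),
        (q ^ (dd m i : ℤ) - q ^ ((dd m i : ℤ) - (t : ℤ))) := by
    apply finprod_eq_prod_of_mulSupport_subset
    intro i hi
    simp only [Finset.coe_range, Set.mem_Iio]
    by_contra h
    have : m i = 0 := hmzero i (by omega)
    rw [Function.mem_mulSupport, this] at hi
    simp at hi
  have h2 : (∏ᶠ i : ℕ, ∏ j ∈ Finset.Icc 1 (m i), (1 - (1 / q) ^ j))
      = ∏ i ∈ Finset.range N, ∏ j ∈ Finset.Icc 1 (m i), (1 - (1 / q) ^ j) := by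
    apply finprod_eq_prod_of_mulSupport_subset
    intro i hi
    simp only [Finset.coe_range, Set.mem_Iio]
    by_contra h
    have : m i = 0 := hmzero i (by omega)
    rw [Function.mem_mulSupport, this] at hi
    simp at hi
  have h3 : (∑ᶠ i : ℕ, (conj m (i + 1)) ^ 2)
      = ∑ i ∈ Finset.range N, (conj m (i + 1)) ^ 2 := by
    apply finsum_eq_sum_of_support_subset
    intro i hi
    simp only [Finset.coe_range, Set.mem_Iio]
    by_contra h
    have : conj m (i + 1) = 0 := hczero (i + 1) (by omega)
    rw [Function.mem_support, this] at hi
    simp at hi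
  rw [h1, h2, h3]
  have hfac : ∀ i, (∏ t ∈ Finset.Icc 1 (m i),
        (q ^ (dd m i : ℤ) - q ^ ((dd m i : ℤ) - (t : ℤ))))
      = q ^ (m i * dd m i) * ∏ t ∈ Finset.Icc 1 (m i), (1 - (1 / q) ^ t) :=
    fun i => inner_prod q hq (dd m i) (m i)
  simp_rw [hfac]
  rw [Finset.prod_mul_distrib, Finset.prod_pow_eq_pow_sum]
  congr 2
  have := sum_md m hm N
  rw [hczero N (by omega)] at this
  simpa using this
end
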